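/- arXiv:1810.07804 — 5 statements merged into one kernel-verified Lean document; each statement's English description precedes it below -/
import Mathlib

section
/- Let R be a 3×3 real orthogonal matrix and define the rotation operator (Rf)(v) = f(Rv) for functions f: ℝ³ → ℂ. If f, g: ℝ³ → ℂ are such that the Boltzmann collision integral Q[f,g](v) is well-defined (the integrand is absolutely integrable) for all v, then for all v ∈ ℝ³ one has Q[f,g](Rv) = Q[Rf, Rg](v). -/
noncomputable section

open MeasureTheory Real

/-- Velocity space `ℝ³`. -/
abbrev V3 := Fin 3 → ℝ

/-- Euclidean norm on `ℝ³`. -/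
def enorm3 (v : V3) : ℝ := Real.sqrt (v 0 ^ 2 + v 1 ^ 2 + v 2 ^ 2)

/-- Normalization `v / |v|` (zero if `v = 0`). -/
def nrm (v : V3) : V3 := (enorm3 v)⁻¹ • v

/-- Generalized Laguerre polynomial `L_n^{(α)}(x)`. -/
def laguerreL (n : ℕ) (α : ℝ) (x : ℝ) : ℝ :=
  ∑ k ∈ Finset.range (n + 1),
    (-1 : ℝ) ^ k * (Real.Gamma (n + α + 1) /
      (Real.Gamma (k + α + 1) * (n - k).factorial * k.factorial)) * x ^ k

/-- Associated Legendre function `P_l^m(x)` (Condon–Shortley phase), via the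
Rodrigues-type formula `P_l^m(x) = ((-1)^m / (2^l l!)) (1-x²)^{m/2} d^{l+m}/dx^{l+m} (x²-1)^l`. -/
def assocLegendre (l : ℕ) (m : ℤ) (x : ℝ) : ℝ :=
  ((-1 : ℝ) ^ m / (2 ^ l * l.factorial)) * (1 - x ^ 2) ^ ((m : ℝ) / 2) *
    iteratedDeriv ((l : ℤ) + m).toNat (fun y : ℝ => (y ^ 2 - 1) ^ l) x

/-- Orthonormal complex spherical harmonic `Y_l^m(u)` evaluated at a unit vector
`u = (sin θ cos φ, sin θ sin φ, cos θ)`. -/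
def sphY (l : ℕ) (m : ℤ) (u : V3) : ℂ :=
  (Real.sqrt ((2 * l + 1) / (4 * Real.pi) *
      ((((l : ℤ) - m).toNat.factorial : ℝ) / (((l : ℤ) + m).toNat.factorial : ℝ))) : ℂ) *
    (assocLegendre l m (u 2) : ℂ) *
    Complex.exp (Complex.I * (m : ℂ) * (Complex.arg ((u 0 : ℂ) + (u 1 : ℂ) * Complex.I) : ℂ))

/-- The Maxwellian `M(v) = (2π)^{-3/2} exp(-|v|²/2)`. -/
def maxwellian (v : V3) : ℝ :=
  (2 * Real.pi) ^ (-(3 : ℝ) / 2) * Real.exp (-enorm3 v ^ 2 / 2)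

/-- The (normalized) Burnett polynomial `p_{lmn}`. -/
def burnett (l : ℕ) (m : ℤ) (n : ℕ) (v : V3) : ℂ :=
  (Real.sqrt ((2 : ℝ) ^ (1 - (l : ℤ)) * Real.pi ^ ((3 : ℝ) / 2) * (n.factorial : ℝ) /
      Real.Gamma ((n : ℝ) + (l : ℝ) + 3 / 2)) : ℂ) *
    (laguerreL n ((l : ℝ) + 1 / 2) (enorm3 v ^ 2 / 2) : ℂ) *
    ((enorm3 v ^ l : ℝ) : ℂ) * sphY l m (nrm v)

/-- The basis function `φ_{lmn} = p_{lmn} M`. -/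
def phiB (l : ℕ) (m : ℤ) (n : ℕ) (v : V3) : ℂ := burnett l m n v * (maxwellian v : ℂ)

/-- Cross product on `ℝ³`. -/
def cross3 (a b : V3) : V3 :=
  ![a 1 * b 2 - a 2 * b 1, a 2 * b 0 - a 0 * b 2, a 0 * b 1 - a 1 * b 0]

/-- A measurable choice of a first unit vector orthogonal to `g`. -/
def e1v (g : V3) : V3 :=
  if g 0 = 0 ∧ g 1 = 0 then ![1, 0, 0] else nrm ![-(g 1), g 0, 0]

/-- The second unit vector orthogonal to `g`, completing `(ĝ, e1v g, e2v g)`. -/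
def e2v (g : V3) : V3 := cross3 (nrm g) (e1v g)

/-- Parametrization of the unit circle `{n : n ⊥ g, |n| = 1}` by the angle `φ`. -/
def circVec (g : V3) (φ : ℝ) : V3 := Real.cos φ • e1v g + Real.sin φ • e2v g

/-- Post-collisional velocity `v'`. -/
def postV (v v₁ : V3) (φ χ : ℝ) : V3 :=
  Real.cos (χ / 2) ^ 2 • v + Real.sin (χ / 2) ^ 2 • v₁ -
    (enorm3 (v - v₁) * Real.cos (χ / 2) * Real.sin (χ / 2)) • circVec (v - v₁) φ

/-- Post-collisional velocity `v₁'`. -/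
def postV1 (v v₁ : V3) (φ χ : ℝ) : V3 :=
  Real.cos (χ / 2) ^ 2 • v₁ + Real.sin (χ / 2) ^ 2 • v +
    (enorm3 (v - v₁) * Real.cos (χ / 2) * Real.sin (χ / 2)) • circVec (v - v₁) φ

/-- The integrand of the Boltzmann collision operator, as a function of
`(v₁, φ, χ)` where `φ` parametrizes the circle `{n : n ⊥ v - v₁, |n| = 1}`. -/
def collKer (B : ℝ → ℝ → ℝ) (f g : V3 → ℂ) (v : V3) (p : V3 × ℝ × ℝ) : ℂ :=
  (B (enorm3 (v - p.1)) p.2.2 : ℂ) *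
    (f (postV1 v p.1 p.2.1 p.2.2) * g (postV v p.1 p.2.1 p.2.2) - f p.1 * g v)

/-- The (bilinear) Boltzmann collision operator `Q[f,g](v)`. -/
def collQ (B : ℝ → ℝ → ℝ) (f g : V3 → ℂ) (v : V3) : ℂ :=
  ∫ v₁ : V3, ∫ φ in (0 : ℝ)..(2 * Real.pi), ∫ χ in (0 : ℝ)..Real.pi,
    collKer B f g v (v₁, φ, χ)

/-- The domain of integration `ℝ³ × (0, 2π] × (0, π]` for the collision integrand. -/
def collDom : Set (V3 × ℝ × ℝ) :=
  Set.univ ×ˢ Set.Ioc 0 (2 * Real.pi) ×ˢ Set.Ioc 0 Real.pi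

/-- The Burnett expansion coefficient `A_{lmn}^{l₁m₁n₁,l₂m₂n₂}` of the collision operator. -/
def coefA (B : ℝ → ℝ → ℝ) (l : ℕ) (m : ℤ) (n : ℕ) (l₁ : ℕ) (m₁ : ℤ) (n₁ : ℕ)
    (l₂ : ℕ) (m₂ : ℤ) (n₂ : ℕ) : ℂ :=
  ∫ v : V3, (starRingEnd ℂ) (burnett l m n v) * collQ B (phiB l₁ m₁ n₁) (phiB l₂ m₂ n₂) v

/-- The three-dimensional Hermite polynomial
`H^{k₁k₂k₃}(v) = ((-1)^{k₁+k₂+k₃}/M(v)) ∂^{k₁+k₂+k₃} M / ∂v₁^{k₁} ∂v₂^{k₂} ∂v₃^{k₃}`. -/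
def hermite3 (k₁ k₂ k₃ : ℕ) (v : V3) : ℝ :=
  ((-1 : ℝ) ^ (k₁ + k₂ + k₃) / maxwellian v) *
    iteratedDeriv k₁ (fun x =>
      iteratedDeriv k₂ (fun y =>
        iteratedDeriv k₃ (fun z => maxwellian ![x, y, z]) (v 2)) (v 1)) (v 0)

/-- The connection coefficient `C_{lmn}^{k₁k₂k₃} = ∫ p_{lmn} H^{k₁k₂k₃} M dv`. -/
def connC (l : ℕ) (m : ℤ) (n : ℕ) (k₁ k₂ k₃ : ℕ) : ℂ :=
  ∫ v : V3, burnett l m n v * ((hermite3 k₁ k₂ k₃ v : ℝ) : ℂ) * ((maxwellian v : ℝ) : ℂ)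

/-- Expansion coefficient of an integrable function in the Burnett basis. -/
def fCoef (f : V3 → ℝ) (l : ℕ) (m : ℤ) (n : ℕ) : ℂ :=
  ∫ v : V3, (starRingEnd ℂ) (burnett l m n v) * (f v : ℂ)

/-- The index set `I_d = {(k₁,k₂,k₃) ∈ ℕ³ : k₁+k₂+k₃ = d}` as a finite set. -/
def idxSet (d : ℕ) : Finset (ℕ × ℕ × ℕ) :=
  (Finset.range (d + 1) ×ˢ Finset.range (d + 1) ×ˢ Finset.range (d + 1)).filter
    (fun k => k.1 + k.2.1 + k.2.2 = d)



namespace CollAux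
open Matrix

lemma cross3_0 (a b : V3) : cross3 a b 0 = a 1 * b 2 - a 2 * b 1 := rfl
lemma cross3_1 (a b : V3) : cross3 a b 1 = a 2 * b 0 - a 0 * b 2 := rfl
lemma cross3_2 (a b : V3) : cross3 a b 2 = a 0 * b 1 - a 1 * b 0 := rfl

lemma dot_expand (x y : V3) : x ⬝ᵥ y = x 0*y 0 + x 1*y 1 + x 2*y 2 := by
  simp [dotProduct, Fin.sum_univ_three]

lemma dot_nonneg (x : V3) : 0 ≤ x ⬝ᵥ x := by
  rw [dot_expand]
  nlinarith [mul_self_nonneg (x 0), mul_self_nonneg (x 1), mul_self_nonneg (x 2)]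

lemma enorm3_eq (v : V3) : enorm3 v = Real.sqrt (v ⬝ᵥ v) := by
  rw [dot_expand, enorm3]; ring_nf

lemma sq_enorm3 (v : V3) : enorm3 v ^ 2 = v ⬝ᵥ v := by
  rw [enorm3_eq]; exact Real.sq_sqrt (dot_nonneg v)

lemma eq_zero_of_dot_self (x : V3) (h : x ⬝ᵥ x = 0) : x = 0 := by
  rw [dot_expand] at h
  have h0 : x 0 = 0 := by nlinarith [mul_self_nonneg (x 0), mul_self_nonneg (x 1), mul_self_nonneg (x 2)]
  have h1 : x 1 = 0 := by nlinarith [mul_self_nonneg (x 0), mul_self_nonneg (x 1), mul_self_nonneg (x 2)]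
  have h2 : x 2 = 0 := by nlinarith [mul_self_nonneg (x 0), mul_self_nonneg (x 1), mul_self_nonneg (x 2)]
  funext i; fin_cases i
  · exact h0
  · exact h1
  · exact h2

lemma dot_pos (x : V3) (hx : x ≠ 0) : 0 < x ⬝ᵥ x :=
  (dot_nonneg x).lt_of_ne fun h => hx (eq_zero_of_dot_self x h.symm)

lemma enorm3_pos (v : V3) (hv : v ≠ 0) : 0 < enorm3 v := by
  rw [enorm3_eq]; exact Real.sqrt_pos.2 (dot_pos v hv)

lemma dot_smul_left (c : ℝ) (x y : V3) : (c • x) ⬝ᵥ y = c * (x ⬝ᵥ y) := by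
  simp only [dot_expand, Pi.smul_apply, smul_eq_mul]; ring

lemma dot_smul_right (c : ℝ) (x y : V3) : x ⬝ᵥ (c • y) = c * (x ⬝ᵥ y) := by
  simp only [dot_expand, Pi.smul_apply, smul_eq_mul]; ring

lemma nrm_dot_self (v : V3) (hv : v ≠ 0) : nrm v ⬝ᵥ nrm v = 1 := by
  have h := enorm3_pos v hv
  rw [nrm, dot_smul_left, dot_smul_right, ← sq_enorm3]
  field_simp

lemma triple (z x y : V3) : z ⬝ᵥ cross3 x y = (Matrix.of ![z, x, y]).det := by
  rw [Matrix.det_fin_three]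
  simp only [dot_expand, cross3_0, cross3_1, cross3_2, Matrix.of_apply,
    Matrix.cons_val', Matrix.cons_val_zero, Matrix.cons_val_one, Matrix.head_cons,
    Matrix.empty_val', Matrix.cons_val_fin_one, Matrix.head_fin_const,
    Matrix.cons_val_two, Matrix.tail_cons]
  ring

lemma cross_dot_left (x y : V3) : x ⬝ᵥ cross3 x y = 0 := by
  simp only [dot_expand, cross3_0, cross3_1, cross3_2]; ring

lemma cross_dot_right (x y : V3) : y ⬝ᵥ cross3 x y = 0 := by
  simp only [dot_expand, cross3_0, cross3_1, cross3_2]; ring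

lemma cross_dot_self (x y : V3) :
    cross3 x y ⬝ᵥ cross3 x y = (x ⬝ᵥ x) * (y ⬝ᵥ y) - (x ⬝ᵥ y)^2 := by
  simp only [dot_expand, cross3_0, cross3_1, cross3_2]; ring

lemma cross_cross (a b : V3) : cross3 a (cross3 a b) = (a ⬝ᵥ b) • a - (a ⬝ᵥ a) • b := by
  funext i; fin_cases i
  · show cross3 a (cross3 a b) 0 = ((a ⬝ᵥ b) • a - (a ⬝ᵥ a) • b) 0
    simp only [Pi.sub_apply, Pi.smul_apply, smul_eq_mul, dot_expand, cross3_0, cross3_1, cross3_2]; ring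
  · show cross3 a (cross3 a b) 1 = ((a ⬝ᵥ b) • a - (a ⬝ᵥ a) • b) 1
    simp only [Pi.sub_apply, Pi.smul_apply, smul_eq_mul, dot_expand, cross3_0, cross3_1, cross3_2]; ring
  · show cross3 a (cross3 a b) 2 = ((a ⬝ᵥ b) • a - (a ⬝ᵥ a) • b) 2
    simp only [Pi.sub_apply, Pi.smul_apply, smul_eq_mul, dot_expand, cross3_0, cross3_1, cross3_2]; ring


lemma transpose_mul_self {R : Matrix (Fin 3) (Fin 3) ℝ}
    (hR : R ∈ Matrix.orthogonalGroup (Fin 3) ℝ) : Rᵀ * R = 1 := by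
  have := (Matrix.mem_orthogonalGroup_iff' (Fin 3) ℝ).mp hR
  simpa [Matrix.star_eq_conjTranspose, Matrix.conjTranspose_eq_transpose_of_trivial] using this

lemma dot_mulVec_mulVec {R : Matrix (Fin 3) (Fin 3) ℝ}
    (hR : R ∈ Matrix.orthogonalGroup (Fin 3) ℝ) (x y : V3) :
    R.mulVec x ⬝ᵥ R.mulVec y = x ⬝ᵥ y := by
  rw [Matrix.dotProduct_mulVec, ← Matrix.mulVec_transpose, Matrix.mulVec_mulVec,
    transpose_mul_self hR, Matrix.one_mulVec]

lemma det_pm_one {R : Matrix (Fin 3) (Fin 3) ℝ}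
    (hR : R ∈ Matrix.orthogonalGroup (Fin 3) ℝ) : R.det = 1 ∨ R.det = -1 := by
  have h : R.det * R.det = 1 := by
    have := congrArg Matrix.det (transpose_mul_self hR)
    rwa [Matrix.det_mul, Matrix.det_transpose, Matrix.det_one] at this
  have h2 : (R.det - 1) * (R.det + 1) = 0 := by ring_nf; linarith
  rcases mul_eq_zero.mp h2 with h' | h'
  · left; linarith
  · right; linarith

set_option maxHeartbeats 1000000 in
lemma onb_expand (u v w : V3)
    (huu : u ⬝ᵥ u = 1) (hvv : v ⬝ᵥ v = 1) (hww : w ⬝ᵥ w = 1)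
    (huv : u ⬝ᵥ v = 0) (huw : u ⬝ᵥ w = 0) (hvw : v ⬝ᵥ w = 0) (x : V3) :
    x = (u ⬝ᵥ x) • u + (v ⬝ᵥ x) • v + (w ⬝ᵥ x) • w := by
  set M : Matrix (Fin 3) (Fin 3) ℝ := Matrix.of ![u, v, w] with hM
  have hMMT : M * Mᵀ = 1 := by
    ext i j
    rw [Matrix.mul_apply, Fin.sum_univ_three]
    fin_cases i <;> fin_cases j <;>
      simp only [hM, Matrix.transpose_apply, Matrix.of_apply, Matrix.cons_val_zero,
        Matrix.cons_val_one, Matrix.head_cons, Matrix.cons_val_two, Matrix.tail_cons,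
        Matrix.one_apply_eq, Matrix.one_apply] <;>
      rw [dot_expand] at huu hvv hww huv huw hvw <;>
      simp <;> linarith [huu, hvv, hww, huv, huw, hvw, mul_comm (u 0) (v 0)]
  have hMTM : Mᵀ * M = 1 := mul_eq_one_comm.mp hMMT
  have hx : Mᵀ.mulVec (M.mulVec x) = x := by
    rw [Matrix.mulVec_mulVec, hMTM, Matrix.one_mulVec]
  conv_lhs => rw [← hx]
  funext j
  simp only [Matrix.mulVec, dotProduct, Matrix.transpose_apply, Fin.sum_univ_three,
    Pi.add_apply, Pi.smul_apply, smul_eq_mul, hM, Matrix.of_apply, Matrix.cons_val_zero,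
    Matrix.cons_val_one, Matrix.head_cons, Matrix.cons_val_two, Matrix.tail_cons, dot_expand]
  ring

lemma rows_mulVec (R : Matrix (Fin 3) (Fin 3) ℝ) (z x y : V3) :
    Matrix.of ![R.mulVec z, R.mulVec x, R.mulVec y] = Matrix.of ![z, x, y] * Rᵀ := by
  ext i j
  rw [Matrix.mul_apply, Fin.sum_univ_three]
  fin_cases i <;>
    simp [Matrix.mulVec, dotProduct, Fin.sum_univ_three, Matrix.cons_val_two,
      Matrix.tail_cons, mul_comm]

lemma cross3_mulVec {R : Matrix (Fin 3) (Fin 3) ℝ}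
    (hR : R ∈ Matrix.orthogonalGroup (Fin 3) ℝ) (x y : V3) :
    cross3 (R.mulVec x) (R.mulVec y) = R.det • R.mulVec (cross3 x y) := by
  have hRRT : R * Rᵀ = 1 := mul_eq_one_comm.mp (transpose_mul_self hR)
  set d : V3 := cross3 (R.mulVec x) (R.mulVec y) - R.det • R.mulVec (cross3 x y) with hd
  have key : ∀ z : V3, R.mulVec z ⬝ᵥ d = 0 := by
    intro z
    have h1 : R.mulVec z ⬝ᵥ cross3 (R.mulVec x) (R.mulVec y) = R.det * (z ⬝ᵥ cross3 x y) := by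
      rw [triple, rows_mulVec, Matrix.det_mul, Matrix.det_transpose, triple]; ring
    have h2 : R.mulVec z ⬝ᵥ (R.det • R.mulVec (cross3 x y)) = R.det * (z ⬝ᵥ cross3 x y) := by
      rw [dotProduct_smul, dot_mulVec_mulVec hR]; simp
    rw [hd, dotProduct_sub, h1, h2, sub_self]
  have hz := key (Rᵀ.mulVec d)
  rw [Matrix.mulVec_mulVec, hRRT, Matrix.one_mulVec] at hz
  have := eq_zero_of_dot_self d hz
  rw [hd, sub_eq_zero] at this
  exact this

lemma nrm_dot_e1v (g : V3) (hg : g ≠ 0) : nrm g ⬝ᵥ e1v g = 0 := by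
  rw [e1v]
  split_ifs with h
  · rw [nrm, dot_smul_left, dot_expand]
    simp [h.1]
  · rw [nrm, nrm, dot_smul_left, dot_smul_right, dot_expand]
    simp only [Matrix.cons_val_zero, Matrix.cons_val_one, Matrix.head_cons,
      Matrix.cons_val_two, Matrix.tail_cons]
    ring_nf

lemma e1v_dot_self (g : V3) : e1v g ⬝ᵥ e1v g = 1 := by
  rw [e1v]
  split_ifs with h
  · rw [dot_expand]; norm_num; rfl
  · apply nrm_dot_self
    intro hzero
    apply h
    constructor
    · have := congrFun hzero 1
      simpa using this
    · have := congrFun hzero 0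
      simpa using this


lemma cross3_smul_add (a : V3) (α β : ℝ) (x y : V3) :
    cross3 a (α • x + β • y) = α • cross3 a x + β • cross3 a y := by
  funext i; fin_cases i
  · show cross3 a _ 0 = (α • cross3 a x + β • cross3 a y) 0
    simp [cross3]; ring
  · show cross3 a _ 1 = (α • cross3 a x + β • cross3 a y) 1
    simp [cross3]; ring
  · show cross3 a _ 2 = (α • cross3 a x + β • cross3 a y) 2
    simp [cross3]; ring


lemma mulVec_ne_zero {R : Matrix (Fin 3) (Fin 3) ℝ} (hR : R ∈ Matrix.orthogonalGroup (Fin 3) ℝ) {g : V3} (hg : g ≠ 0) :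
    R.mulVec g ≠ 0 := by
  intro h
  apply hg
  have : Rᵀ.mulVec (R.mulVec g) = Rᵀ.mulVec 0 := by rw [h]
  rwa [Matrix.mulVec_mulVec, transpose_mul_self hR, Matrix.one_mulVec,
    Matrix.mulVec_zero] at this

lemma enorm3_mulVec {R : Matrix (Fin 3) (Fin 3) ℝ} (hR : R ∈ Matrix.orthogonalGroup (Fin 3) ℝ) (v : V3) :
    enorm3 (R.mulVec v) = enorm3 v := by
  rw [enorm3_eq, enorm3_eq, dot_mulVec_mulVec hR]

lemma nrm_mulVec {R : Matrix (Fin 3) (Fin 3) ℝ} (hR : R ∈ Matrix.orthogonalGroup (Fin 3) ℝ) (v : V3) :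
    nrm (R.mulVec v) = R.mulVec (nrm v) := by
  rw [nrm, nrm, enorm3_mulVec hR, Matrix.mulVec_smul]

lemma circVec_rot {R : Matrix (Fin 3) (Fin 3) ℝ} (hR : R ∈ Matrix.orthogonalGroup (Fin 3) ℝ) (g : V3) (hg : g ≠ 0) :
    ∃ δ : ℝ, ∀ φ : ℝ, circVec (R.mulVec g) φ = R.mulVec (circVec g (R.det * φ + δ)) := by
  have hRg : R.mulVec g ≠ 0 := mulVec_ne_zero hR hg
  set gh := nrm g
  set e₁ := e1v g
  set e₂ := e2v g
  set a₀ : V3 := R.mulVec gh with ha₀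
  set a₁ : V3 := R.mulVec e₁ with ha₁
  set a₂ : V3 := R.mulVec e₂ with ha₂
  -- orthonormality of (gh, e₁, e₂)
  have hghgh : gh ⬝ᵥ gh = 1 := nrm_dot_self g hg
  have hghe₁ : gh ⬝ᵥ e₁ = 0 := nrm_dot_e1v g hg
  have he₁e₁ : e₁ ⬝ᵥ e₁ = 1 := e1v_dot_self g
  have hghe₂ : gh ⬝ᵥ e₂ = 0 := cross_dot_left gh e₁
  have he₁e₂ : e₁ ⬝ᵥ e₂ = 0 := cross_dot_right gh e₁
  have he₂e₂ : e₂ ⬝ᵥ e₂ = 1 := by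
    rw [show e₂ = cross3 gh e₁ from rfl, cross_dot_self, hghgh, he₁e₁, hghe₁]; norm_num
  -- orthonormality of (a₀, a₁, a₂)
  have h00 : a₀ ⬝ᵥ a₀ = 1 := by rw [ha₀, dot_mulVec_mulVec hR]; exact hghgh
  have h11 : a₁ ⬝ᵥ a₁ = 1 := by rw [ha₁, dot_mulVec_mulVec hR]; exact he₁e₁
  have h22 : a₂ ⬝ᵥ a₂ = 1 := by rw [ha₂, dot_mulVec_mulVec hR]; exact he₂e₂
  have h01 : a₀ ⬝ᵥ a₁ = 0 := by rw [ha₀, ha₁, dot_mulVec_mulVec hR]; exact hghe₁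
  have h02 : a₀ ⬝ᵥ a₂ = 0 := by rw [ha₀, ha₂, dot_mulVec_mulVec hR]; exact hghe₂
  have h12 : a₁ ⬝ᵥ a₂ = 0 := by rw [ha₁, ha₂, dot_mulVec_mulVec hR]; exact he₁e₂
  set E₁ := e1v (R.mulVec g) with hE₁
  set E₂ := e2v (R.mulVec g) with hE₂
  have hnrmRg : nrm (R.mulVec g) = a₀ := nrm_mulVec hR g
  -- coefficients
  set α := a₁ ⬝ᵥ E₁ with hα
  set β := a₂ ⬝ᵥ E₁ with hβ
  have hc0 : a₀ ⬝ᵥ E₁ = 0 := by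
    rw [← hnrmRg, hE₁]; exact nrm_dot_e1v _ hRg
  have hexp : E₁ = α • a₁ + β • a₂ := by
    have h := onb_expand a₀ a₁ a₂ h00 h11 h22 h01 h02 h12 E₁
    rw [hc0, zero_smul, zero_add] at h
    exact h
  have hαβ : α ^ 2 + β ^ 2 = 1 := by
    have h1 : E₁ ⬝ᵥ E₁ = 1 := e1v_dot_self (R.mulVec g)
    nth_rewrite 1 [hexp] at h1
    rw [add_dotProduct, dot_smul_left, dot_smul_left, ← hα, ← hβ] at h1
    nlinarith [h1]
  obtain ⟨δ, hcosδ, hsinδ⟩ : ∃ δ : ℝ, Real.cos δ = α ∧ Real.sin δ = β := by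
    set z : ℂ := ⟨α, β⟩ with hz
    have habs : ‖z‖ = 1 := by
      rw [Complex.norm_def, Complex.normSq_mk]
      rw [show α * α + β * β = 1 by nlinarith [hαβ]]
      exact Real.sqrt_one
    have hz0 : z ≠ 0 := by
      intro h
      rw [h] at habs
      simp at habs
    refine ⟨Complex.arg z, ?_, ?_⟩
    · rw [Complex.cos_arg hz0, habs, div_one]
    · rw [Complex.sin_arg, habs, div_one]
  have he₂def : cross3 gh e₁ = e₂ := rfl
  have hcrossRe1 : cross3 a₀ a₁ = R.det • a₂ := by
    rw [ha₀, ha₁, cross3_mulVec hR, he₂def, ← ha₂]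
  have hcrossRe2 : cross3 a₀ a₂ = (-R.det) • a₁ := by
    rw [ha₀, ha₂, cross3_mulVec hR]
    have hc : cross3 gh e₂ = -e₁ := by
      have h := CollAux.cross_cross gh e₁
      rw [hghe₁, hghgh] at h
      rw [show cross3 gh e₂ = cross3 gh (cross3 gh e₁) from rfl, h]
      simp
    rw [hc, Matrix.mulVec_neg, ← ha₁]
    module
  have hE₂exp : E₂ = R.det • (α • a₂ - β • a₁) := by
    rw [hE₂, show e2v (R.mulVec g) = cross3 (nrm (R.mulVec g)) (e1v (R.mulVec g)) from rfl, hnrmRg, ← hE₁, hexp, cross3_smul_add, hcrossRe1, hcrossRe2]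
    module
  refine ⟨δ, fun φ => ?_⟩
  have hψcos : Real.cos (R.det * φ + δ) = Real.cos φ * α - R.det * (Real.sin φ * β) := by
    rcases det_pm_one hR with h | h <;>
      rw [h] <;> simp [Real.cos_add, Real.sin_add, hcosδ, hsinδ] <;> ring
  have hψsin : Real.sin (R.det * φ + δ) = R.det * (Real.sin φ * α) + Real.cos φ * β := by
    rcases det_pm_one hR with h | h <;>
      rw [h] <;> simp [Real.sin_add, Real.cos_add, hcosδ, hsinδ] <;> ring
  show Real.cos φ • E₁ + Real.sin φ • E₂ = _
  rw [circVec, Matrix.mulVec_add, Matrix.mulVec_smul, Matrix.mulVec_smul, ← ha₁]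
  rw [show R.mulVec (e2v g) = a₂ from rfl]
  rw [hexp, hE₂exp, hψcos, hψsin]
  match_scalars <;> ring


-- degenerate case
lemma enorm3_zero : enorm3 (0 : V3) = 0 := by simp [enorm3]

lemma postV_self (v : V3) (φ χ : ℝ) : postV v v φ χ = v := by
  rw [postV, sub_self, enorm3_zero]
  rw [show (0 : ℝ) * Real.cos (χ/2) * Real.sin (χ/2) = 0 by ring, zero_smul, sub_zero,
    ← add_smul]
  rw [show Real.cos (χ/2)^2 + Real.sin (χ/2)^2 = 1 from by
    rw [add_comm]; exact Real.sin_sq_add_cos_sq _]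
  rw [one_smul]

lemma postV1_self (v : V3) (φ χ : ℝ) : postV1 v v φ χ = v := by
  rw [postV1, sub_self, enorm3_zero]
  rw [show (0 : ℝ) * Real.cos (χ/2) * Real.sin (χ/2) = 0 by ring, zero_smul, add_zero,
    ← add_smul]
  rw [show Real.cos (χ/2)^2 + Real.sin (χ/2)^2 = 1 from by
    rw [add_comm]; exact Real.sin_sq_add_cos_sq _]
  rw [one_smul]

lemma collKer_self (B : ℝ → ℝ → ℝ) (f g : V3 → ℂ) (v : V3) (φ χ : ℝ) :
    collKer B f g v (v, φ, χ) = 0 := by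
  rw [collKer]
  simp [postV_self, postV1_self]


lemma post_rot {R : Matrix (Fin 3) (Fin 3) ℝ} (hR : R ∈ Matrix.orthogonalGroup (Fin 3) ℝ) (v v₁ : V3) (hne : v - v₁ ≠ 0) :
    ∃ δ : ℝ, ∀ φ χ : ℝ,
      postV (R.mulVec v) (R.mulVec v₁) φ χ = R.mulVec (postV v v₁ (R.det * φ + δ) χ) ∧
      postV1 (R.mulVec v) (R.mulVec v₁) φ χ = R.mulVec (postV1 v v₁ (R.det * φ + δ) χ) := by
  obtain ⟨δ, hδ⟩ := circVec_rot hR (v - v₁) hne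
  refine ⟨δ, fun φ χ => ?_⟩
  have hsub : R.mulVec v - R.mulVec v₁ = R.mulVec (v - v₁) := (Matrix.mulVec_sub R v v₁).symm
  constructor
  · rw [postV, postV, hsub, enorm3_mulVec hR, hδ φ]
    simp only [Matrix.mulVec_add, Matrix.mulVec_sub, Matrix.mulVec_smul]
  · rw [postV1, postV1, hsub, enorm3_mulVec hR, hδ φ]
    simp only [Matrix.mulVec_add, Matrix.mulVec_sub, Matrix.mulVec_smul]

lemma collKer_rot {R : Matrix (Fin 3) (Fin 3) ℝ} (hR : R ∈ Matrix.orthogonalGroup (Fin 3) ℝ) (B : ℝ → ℝ → ℝ) (f g : V3 → ℂ)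
    (v v₁ : V3) (hne : v - v₁ ≠ 0) :
    ∃ δ : ℝ, ∀ φ χ : ℝ,
      collKer B f g (R.mulVec v) (R.mulVec v₁, φ, χ) =
        collKer B (fun w => f (R.mulVec w)) (fun w => g (R.mulVec w)) v
          (v₁, R.det * φ + δ, χ) := by
  obtain ⟨δ, hδ⟩ := post_rot hR v v₁ hne
  refine ⟨δ, fun φ χ => ?_⟩
  obtain ⟨h1, h2⟩ := hδ φ χ
  rw [collKer, collKer]
  simp only
  rw [h1, h2, ← Matrix.mulVec_sub, enorm3_mulVec hR]


lemma circVec_periodic (g : V3) (φ : ℝ) : circVec g (φ + 2*Real.pi) = circVec g φ := by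
  rw [circVec, circVec, Real.cos_add_two_pi, Real.sin_add_two_pi]

lemma collKer_periodic (B : ℝ → ℝ → ℝ) (f g : V3 → ℂ) (v v₁ : V3) (φ χ : ℝ) :
    collKer B f g v (v₁, φ + 2*Real.pi, χ) = collKer B f g v (v₁, φ, χ) := by
  simp only [collKer, postV, postV1, circVec_periodic]


lemma inner_eq {R : Matrix (Fin 3) (Fin 3) ℝ} (hR : R ∈ Matrix.orthogonalGroup (Fin 3) ℝ) (B : ℝ → ℝ → ℝ) (f g : V3 → ℂ)
    (v v₁ : V3) :
    (∫ φ in (0:ℝ)..(2*Real.pi), ∫ χ in (0:ℝ)..Real.pi,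
        collKer B f g (R.mulVec v) (R.mulVec v₁, φ, χ)) =
      ∫ φ in (0:ℝ)..(2*Real.pi), ∫ χ in (0:ℝ)..Real.pi,
        collKer B (fun w => f (R.mulVec w)) (fun w => g (R.mulVec w)) v (v₁, φ, χ) := by
  by_cases hvv : v - v₁ = 0
  · have hv : v₁ = v := by
      have := sub_eq_zero.mp hvv; exact this.symm
    subst hv
    simp [collKer_self]
  · obtain ⟨δ, hδ⟩ := collKer_rot hR B f g v v₁ hvv
    set K : ℝ → ℂ := fun ψ => ∫ χ in (0:ℝ)..Real.pi,
      collKer B (fun w => f (R.mulVec w)) (fun w => g (R.mulVec w)) v (v₁, ψ, χ) with hK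
    have hKper : Function.Periodic K (2*Real.pi) := by
      intro ψ
      simp only [hK]
      congr 1
      funext χ
      exact collKer_periodic _ _ _ _ _ _ _
    have hH : ∀ φ : ℝ, (∫ χ in (0:ℝ)..Real.pi,
        collKer B f g (R.mulVec v) (R.mulVec v₁, φ, χ)) = K (R.det * φ + δ) := by
      intro φ
      simp only [hK]
      congr 1
      funext χ
      exact hδ φ χ
    calc (∫ φ in (0:ℝ)..(2*Real.pi), ∫ χ in (0:ℝ)..Real.pi,
        collKer B f g (R.mulVec v) (R.mulVec v₁, φ, χ))
        = ∫ φ in (0:ℝ)..(2*Real.pi), K (R.det * φ + δ) := by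
          congr 1; funext φ; exact hH φ
      _ = ∫ φ in (0:ℝ)..(2*Real.pi), K φ := by
          rcases det_pm_one hR with hdet | hdet
          · rw [show (fun φ : ℝ => K (R.det * φ + δ)) = fun φ : ℝ => K (φ + δ) from
              funext fun φ => by rw [hdet]; ring_nf]
            rw [intervalIntegral.integral_comp_add_right K δ]
            rw [show (0:ℝ) + δ = δ by ring, show 2*Real.pi + δ = δ + 2*Real.pi by ring]
            rw [hKper.intervalIntegral_add_eq δ 0]
            norm_num
          · rw [show (fun φ : ℝ => K (R.det * φ + δ)) = fun φ : ℝ => K (δ - φ) from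
              funext fun φ => by rw [hdet]; ring_nf]
            rw [intervalIntegral.integral_comp_sub_left K δ]
            rw [show δ - 0 = (δ - 2*Real.pi) + 2*Real.pi by ring]
            rw [hKper.intervalIntegral_add_eq (δ - 2*Real.pi) 0]
            norm_num
      _ = _ := by rw [hK]

lemma measurePreserving_mulVec {R : Matrix (Fin 3) (Fin 3) ℝ} (hR : R ∈ Matrix.orthogonalGroup (Fin 3) ℝ) :
    MeasurePreserving (fun u : V3 => R.mulVec u) volume volume := by
  have hdet0 : R.det ≠ 0 := by
    rcases det_pm_one hR with h | h <;> rw [h] <;> norm_num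
  have hfun : (fun u : V3 => R.mulVec u) = ⇑(Matrix.toLin' R) :=
    funext fun u => (Matrix.toLin'_apply R u).symm
  constructor
  · rw [hfun]
    exact (LinearMap.continuous_on_pi _).measurable
  · rw [hfun, Real.map_matrix_volume_pi_eq_smul_volume_pi hdet0]
    rcases det_pm_one hR with h | h <;> rw [h] <;> norm_num

lemma measurableEmbedding_mulVec {R : Matrix (Fin 3) (Fin 3) ℝ} (hR : R ∈ Matrix.orthogonalGroup (Fin 3) ℝ) :
    MeasurableEmbedding (fun u : V3 => R.mulVec u) := by
  have hdet0 : R.det ≠ 0 := by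
    rcases det_pm_one hR with h | h <;> rw [h] <;> norm_num
  have hinv : Invertible R := R.invertibleOfIsUnitDet (isUnit_iff_ne_zero.mpr hdet0)
  let e : V3 ≃ₗ[ℝ] V3 := R.toLinearEquiv' hinv
  have hfun : (fun u : V3 => R.mulVec u) = ⇑(e.toContinuousLinearEquiv.toHomeomorph) := by
    funext u
    rfl
  rw [hfun]
  exact e.toContinuousLinearEquiv.toHomeomorph.measurableEmbedding


end CollAux

/-- Lemma 1, rotation invariance of the collision operator.
If `R` is a `3×3` orthogonal matrix and `Q[f,g](v)` is well-defined (absolutely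
convergent collision integrand) for every `v`, then
`Q[f,g](Rv) = Q[Rf, Rg](v)` for all `v`, where `(Rf)(v) = f(Rv)`. -/
theorem collision_rotation_invariance
    (B : ℝ → ℝ → ℝ) (hBmeas : Measurable (Function.uncurry B))
    (hBpos : ∀ r χ, 0 ≤ B r χ)
    (f g : V3 → ℂ)
    (R : Matrix (Fin 3) (Fin 3) ℝ) (hR : R ∈ Matrix.orthogonalGroup (Fin 3) ℝ)
    (hint : ∀ v : V3, IntegrableOn (collKer B f g v) collDom volume) :
    ∀ v : V3,
      collQ B f g (R.mulVec v) =
        collQ B (fun w => f (R.mulVec w)) (fun w => g (R.mulVec w)) v := by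
  intro v
  rw [collQ, collQ]
  rw [← MeasurePreserving.integral_comp (CollAux.measurePreserving_mulVec hR)
    (CollAux.measurableEmbedding_mulVec hR)
    (fun v₁ => ∫ φ in (0:ℝ)..(2*Real.pi), ∫ χ in (0:ℝ)..Real.pi,
      collKer B f g (R.mulVec v) (v₁, φ, χ))]
  exact integral_congr_ae (Filter.Eventually.of_forall fun u => CollAux.inner_eq hR B f g v u)

end
end

section
/- If m ≠ m₁ + m₂, then the Burnett expansion coefficient of the collision operator A_{lmn}^{l₁m₁n₁, l₂m₂n₂} = ∫_{ℝ³} conj(p_{lmn}(v)) Q[φ_{l₁m₁n₁}, φ_{l₂m₂n₂}](v) dv equals zero. -/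
noncomputable section

open MeasureTheory Real

/-- Rotation about the z-axis by angle α. -/
def rotZ (α : ℝ) (v : V3) : V3 :=
  ![v 0 * Real.cos α - v 1 * Real.sin α, v 0 * Real.sin α + v 1 * Real.cos α, v 2]

@[simp] lemma rotZ_apply0 (α : ℝ) (v : V3) : rotZ α v 0 = v 0 * Real.cos α - v 1 * Real.sin α := rfl
@[simp] lemma rotZ_apply1 (α : ℝ) (v : V3) : rotZ α v 1 = v 0 * Real.sin α + v 1 * Real.cos α := rfl
@[simp] lemma rotZ_apply2 (α : ℝ) (v : V3) : rotZ α v 2 = v 2 := rfl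

lemma rotZ_smul (α : ℝ) (c : ℝ) (v : V3) : rotZ α (c • v) = c • rotZ α v := by
  funext i
  fin_cases i <;> simp [rotZ, Pi.smul_apply, smul_eq_mul] <;> ring

lemma rotZ_add (α : ℝ) (v w : V3) : rotZ α (v + w) = rotZ α v + rotZ α w := by
  funext i
  fin_cases i <;> simp [rotZ, Pi.add_apply] <;> ring

lemma rotZ_sub (α : ℝ) (v w : V3) : rotZ α (v - w) = rotZ α v - rotZ α w := by
  funext i
  fin_cases i <;> simp [rotZ, Pi.sub_apply] <;> ring

@[simp] lemma rotZ_zero (α : ℝ) : rotZ α (0 : V3) = 0 := by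
  funext i; fin_cases i <;> simp [rotZ]

lemma enorm3_rotZ (α : ℝ) (v : V3) : enorm3 (rotZ α v) = enorm3 v := by
  unfold enorm3
  congr 1
  have h := Real.sin_sq_add_cos_sq α
  simp only [rotZ_apply0, rotZ_apply1, rotZ_apply2]
  ring_nf
  nlinarith [h]

lemma rotZ_rotZ (α : ℝ) (v : V3) : rotZ (-α) (rotZ α v) = v := by
  funext i
  have h := Real.sin_sq_add_cos_sq α
  fin_cases i <;> simp [rotZ, Real.cos_neg, Real.sin_neg]
  · linear_combination (v 0) * h
  · linear_combination (v 1) * h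

lemma nrm_rotZ (α : ℝ) (v : V3) : nrm (rotZ α v) = rotZ α (nrm v) := by
  unfold nrm
  rw [enorm3_rotZ, rotZ_smul]

/-- Rotation matrix about z-axis. -/
def rotZM (α : ℝ) : Matrix (Fin 3) (Fin 3) ℝ :=
  ![![Real.cos α, -Real.sin α, 0], ![Real.sin α, Real.cos α, 0], ![0, 0, 1]]

lemma rotZ_eq_toLin' (α : ℝ) : rotZ α = Matrix.toLin' (rotZM α) := by
  funext v i
  fin_cases i <;> rw [Matrix.toLin'_apply] <;>
    simp [rotZ, rotZM, Matrix.toLin'_apply, Matrix.mulVec, dotProduct,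
      Fin.sum_univ_three] <;> ring

lemma rotZ_continuous (α : ℝ) : Continuous (rotZ α) := by
  rw [rotZ_eq_toLin']
  exact LinearMap.continuous_on_pi _

lemma rotZ_measurable (α : ℝ) : Measurable (rotZ α) := (rotZ_continuous α).measurable

/-- Rotation as a homeomorphism. -/
def rotZHomeo (α : ℝ) : V3 ≃ₜ V3 where
  toFun := rotZ α
  invFun := rotZ (-α)
  left_inv := rotZ_rotZ α
  right_inv := fun v => by
    have := rotZ_rotZ (-α) v
    rwa [neg_neg] at this
  continuous_toFun := rotZ_continuous α
  continuous_invFun := rotZ_continuous (-α)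

lemma rotZ_det (α : ℝ) : LinearMap.det (Matrix.toLin' (rotZM α)) = 1 := by
  rw [LinearMap.det_toLin']
  rw [Matrix.det_fin_three]
  simp [rotZM]
  nlinarith [Real.sin_sq_add_cos_sq α]

lemma rotZ_measurePreserving (α : ℝ) :
    MeasurePreserving (rotZ α) (volume : Measure V3) volume := by
  constructor
  · exact rotZ_measurable α
  · rw [rotZ_eq_toLin']
    rw [Real.map_linearMap_volume_pi_eq_smul_volume_pi (by rw [rotZ_det]; norm_num)]
    rw [rotZ_det]
    norm_num

lemma integral_rotZ (α : ℝ) (F : V3 → ℂ) : ∫ v : V3, F (rotZ α v) = ∫ v : V3, F v :=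
  (rotZ_measurePreserving α).integral_comp (rotZHomeo α).measurableEmbedding F

lemma expImArg (z : ℂ) (hz : z ≠ 0) (m : ℤ) :
    Complex.exp (Complex.I * (m : ℂ) * (Complex.arg z : ℂ)) = (z / (‖z‖ : ℂ)) ^ m := by
  have habs : (‖z‖ : ℂ) ≠ 0 := by
    simpa using hz
  have h1 : (z / (‖z‖ : ℂ)) = Complex.exp ((Complex.arg z : ℂ) * Complex.I) := by
    rw [div_eq_iff habs, mul_comm]
    exact (Complex.norm_mul_exp_arg_mul_I z).symm
  rw [h1, ← Complex.exp_int_mul]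
  ring_nf

lemma sphY_rotZ (α : ℝ) (l : ℕ) (m : ℤ) (u : V3)
    (hz : (u 0 : ℂ) + (u 1 : ℂ) * Complex.I ≠ 0) :
    sphY l m (rotZ α u) = Complex.exp (Complex.I * (m : ℂ) * (α : ℂ)) * sphY l m u := by
  set z : ℂ := (u 0 : ℂ) + (u 1 : ℂ) * Complex.I with hzdef
  have hw : ((rotZ α u 0 : ℝ) : ℂ) + ((rotZ α u 1 : ℝ) : ℂ) * Complex.I
      = z * Complex.exp ((α : ℂ) * Complex.I) := by
    rw [Complex.exp_mul_I]
    simp only [rotZ_apply0, rotZ_apply1, hzdef]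
    push_cast
    linear_combination (-(u 1 : ℂ)) * Complex.sin (α : ℂ) * Complex.I_sq
  have hexpne : Complex.exp ((α : ℂ) * Complex.I) ≠ 0 := Complex.exp_ne_zero _
  have hwne : z * Complex.exp ((α : ℂ) * Complex.I) ≠ 0 := mul_ne_zero hz hexpne
  have habse : ‖Complex.exp ((α : ℂ) * Complex.I)‖ = 1 := by
    rw [Complex.norm_exp]
    simp
  have key : Complex.exp (Complex.I * (m : ℂ) *
        (Complex.arg (((rotZ α u 0 : ℝ) : ℂ) + ((rotZ α u 1 : ℝ) : ℂ) * Complex.I) : ℂ))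
      = Complex.exp (Complex.I * (m : ℂ) * (α : ℂ)) *
        Complex.exp (Complex.I * (m : ℂ) * (Complex.arg z : ℂ)) := by
    rw [hw, expImArg _ hwne m, expImArg _ hz m]
    rw [norm_mul, habse, mul_one]
    have h2 : z * Complex.exp ((α : ℂ) * Complex.I) / (‖z‖ : ℂ)
        = (z / (‖z‖ : ℂ)) * Complex.exp ((α : ℂ) * Complex.I) := by ring
    rw [h2, mul_zpow, ← Complex.exp_int_mul]
    have h3 : (m : ℂ) * ((α : ℂ) * Complex.I) = Complex.I * (m : ℂ) * (α : ℂ) := by ring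
    rw [h3, mul_comm]
  unfold sphY
  rw [rotZ_apply2, key]
  ring

lemma enorm3_pos_of_ne (v : V3) (hv : v ≠ 0) : 0 < enorm3 v := by
  have h1 : v 0 ≠ 0 ∨ v 1 ≠ 0 ∨ v 2 ≠ 0 := by
    by_contra h
    push_neg at h
    apply hv
    funext i
    fin_cases i <;> simp [h.1, h.2.1, h.2.2]
  apply Real.sqrt_pos.mpr
  rcases h1 with h | h | h <;>
    nlinarith [mul_self_pos.mpr h, sq_nonneg (v 0), sq_nonneg (v 1), sq_nonneg (v 2)]

lemma enorm3_smul (c : ℝ) (v : V3) : enorm3 (c • v) = |c| * enorm3 v := by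
  unfold enorm3
  have : (c • v) 0 ^ 2 + (c • v) 1 ^ 2 + (c • v) 2 ^ 2
      = c ^ 2 * (v 0 ^ 2 + v 1 ^ 2 + v 2 ^ 2) := by
    simp [Pi.smul_apply, smul_eq_mul]; ring
  rw [this, Real.sqrt_mul (sq_nonneg c), Real.sqrt_sq_eq_abs]

lemma enorm3_nrm (v : V3) (hv : v ≠ 0) : enorm3 (nrm v) = 1 := by
  have h := enorm3_pos_of_ne v hv
  unfold nrm
  rw [enorm3_smul, abs_of_pos (inv_pos.mpr h), inv_mul_cancel₀ (ne_of_gt h)]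

lemma assocLegendre_eq_zero (l : ℕ) (m : ℤ) (hm : m ≠ 0) (x : ℝ) (hx : x ^ 2 = 1) :
    assocLegendre l m x = 0 := by
  unfold assocLegendre
  rw [hx]
  have : (1 : ℝ) - 1 = 0 := by ring
  rw [this, Real.zero_rpow (by
    simp only [ne_eq, div_eq_zero_iff]
    push_neg
    exact ⟨by exact_mod_cast hm, by norm_num⟩)]
  ring

lemma sphY_eq_zero (l : ℕ) (m : ℤ) (u : V3) (hm : m ≠ 0) (hx : u 2 ^ 2 = 1) :
    sphY l m u = 0 := by
  unfold sphY
  rw [assocLegendre_eq_zero l m hm _ hx]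
  simp

lemma burnett_rotZ (α : ℝ) (l : ℕ) (m : ℤ) (n : ℕ)
    (hm : -(l : ℤ) ≤ m ∧ m ≤ (l : ℤ)) (v : V3) :
    burnett l m n (rotZ α v) = Complex.exp (Complex.I * (m : ℂ) * (α : ℂ)) * burnett l m n v := by
  by_cases hv : v = 0
  · subst hv
    rcases Nat.eq_zero_or_pos l with hl | hl
    · subst hl
      have hm0 : m = 0 := le_antisymm (by exact_mod_cast hm.2) (by
        have := hm.1; simpa using this)
      subst hm0
      simp only [Int.cast_zero, mul_zero, zero_mul, Complex.exp_zero, one_mul, rotZ_zero]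
    · have h0 : enorm3 (0 : V3) = 0 := by
        simp [enorm3]
      unfold burnett
      rw [rotZ_zero, h0]
      push_cast
      rw [zero_pow (by omega : l ≠ 0)]
      ring
  · unfold burnett
    rw [enorm3_rotZ, nrm_rotZ]
    set u := nrm v with hu
    by_cases hz : (u 0 : ℂ) + (u 1 : ℂ) * Complex.I ≠ 0
    · rw [sphY_rotZ α l m u hz]
      ring
    · push_neg at hz
      have h01 : u 0 = 0 ∧ u 1 = 0 := by
        constructor
        · have := congrArg Complex.re hz
          simpa using this
        · have := congrArg Complex.im hz
          simpa using this
      have hru : rotZ α u = u := by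
        funext i
        fin_cases i <;> simp [rotZ, h01.1, h01.2]
      rw [hru]
      by_cases hm0 : m = 0
      · subst hm0
        simp only [Int.cast_zero, mul_zero, zero_mul, Complex.exp_zero, one_mul]
      · have hnu : enorm3 u = 1 := enorm3_nrm v hv
        have hx : u 2 ^ 2 = 1 := by
          have : Real.sqrt (u 0 ^ 2 + u 1 ^ 2 + u 2 ^ 2) = 1 := hnu
          have h2 : u 0 ^ 2 + u 1 ^ 2 + u 2 ^ 2 = 1 := by
            nlinarith [Real.sq_sqrt (by positivity : (0:ℝ) ≤ u 0 ^ 2 + u 1 ^ 2 + u 2 ^ 2)]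
          nlinarith [h01.1, h01.2]
        rw [sphY_eq_zero l m u hm0 hx]
        ring

lemma maxwellian_rotZ (α : ℝ) (v : V3) : maxwellian (rotZ α v) = maxwellian v := by
  unfold maxwellian
  rw [enorm3_rotZ]

lemma phiB_rotZ (α : ℝ) (l : ℕ) (m : ℤ) (n : ℕ)
    (hm : -(l : ℤ) ≤ m ∧ m ≤ (l : ℤ)) (v : V3) :
    phiB l m n (rotZ α v) = Complex.exp (Complex.I * (m : ℂ) * (α : ℂ)) * phiB l m n v := by
  unfold phiB
  rw [burnett_rotZ α l m n hm v, maxwellian_rotZ]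
  ring

lemma cross3_rotZ (α : ℝ) (a b : V3) :
    cross3 (rotZ α a) (rotZ α b) = rotZ α (cross3 a b) := by
  have h := Real.sin_sq_add_cos_sq α
  funext i
  fin_cases i <;>
    simp [cross3, rotZ]
  · ring
  · ring
  · linear_combination (a 0 * b 1 - a 1 * b 0) * h

lemma rotZ_cond (α : ℝ) (g : V3) :
    (rotZ α g 0 = 0 ∧ rotZ α g 1 = 0) ↔ (g 0 = 0 ∧ g 1 = 0) := by
  have h := Real.sin_sq_add_cos_sq α
  constructor
  · rintro ⟨h1, h2⟩
    simp only [rotZ_apply0, rotZ_apply1] at h1 h2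
    constructor
    · linear_combination (Real.cos α) * h1 + (Real.sin α) * h2 - (g 0) * h
    · linear_combination (-(Real.sin α)) * h1 + (Real.cos α) * h2 - (g 1) * h
  · rintro ⟨h1, h2⟩
    simp [h1, h2]

lemma e1v_rotZ (α : ℝ) (g : V3) (hg : ¬(g 0 = 0 ∧ g 1 = 0)) :
    e1v (rotZ α g) = rotZ α (e1v g) := by
  unfold e1v
  rw [if_neg (fun h => hg ((rotZ_cond α g).mp h)), if_neg hg, ← nrm_rotZ]
  have hv : ![-(rotZ α g 1), rotZ α g 0, 0] = rotZ α ![-(g 1), g 0, 0] := by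
    funext i
    fin_cases i <;> simp [rotZ] <;> ring
  rw [hv]

lemma circVec_rotZ_nondeg (α : ℝ) (g : V3) (hg : ¬(g 0 = 0 ∧ g 1 = 0)) (φ : ℝ) :
    circVec (rotZ α g) φ = rotZ α (circVec g φ) := by
  unfold circVec e2v
  rw [e1v_rotZ α g hg, nrm_rotZ, cross3_rotZ, rotZ_add, rotZ_smul, rotZ_smul]

lemma circVec_shift (α : ℝ) (g : V3) (hg : g ≠ 0) :
    ∃ σ : ℝ, ∀ φ : ℝ, circVec (rotZ α g) φ = rotZ α (circVec g (φ + σ)) := by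
  by_cases h01 : g 0 = 0 ∧ g 1 = 0
  · have hg2 : g 2 ≠ 0 := by
      intro h2
      apply hg
      funext i
      fin_cases i <;> simp [h01.1, h01.2, h2]
    have hgr : rotZ α g = g := by
      funext i
      fin_cases i <;> simp [rotZ, h01.1, h01.2]
    have he1 : e1v g = ![1, 0, 0] := by unfold e1v; rw [if_pos h01]
    have hen : enorm3 g = |g 2| := by
      unfold enorm3
      rw [h01.1, h01.2]
      rw [show (0:ℝ) ^ 2 + 0 ^ 2 + g 2 ^ 2 = g 2 ^ 2 by ring, Real.sqrt_sq_eq_abs]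
    set t : ℝ := |g 2|⁻¹ * g 2 with ht
    have hnrm : nrm g = ![0, 0, t] := by
      unfold nrm
      rw [hen]
      funext i
      fin_cases i <;> simp [h01.1, h01.2, ht]
    have he2 : e2v g = ![0, t, 0] := by
      unfold e2v
      rw [hnrm, he1]
      funext i
      fin_cases i <;> simp [cross3]
    have hcv : ∀ φ, circVec g φ = ![Real.cos φ, t * Real.sin φ, 0] := by
      intro φ
      unfold circVec
      rw [he1, he2]
      funext i
      fin_cases i <;> simp <;> ring
    have ht2 : t = 1 ∨ t = -1 := by
      rcases lt_or_gt_of_ne hg2 with h | h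
      · right; rw [ht, abs_of_neg h]; field_simp
      · left; rw [ht, abs_of_pos h]; field_simp
    refine ⟨-t * α, fun φ => ?_⟩
    rw [hgr, hcv, hcv]
    funext i
    rcases ht2 with ht1 | ht1 <;> rw [ht1] <;> fin_cases i <;>
      simp [rotZ, Real.cos_add, Real.sin_add, Real.cos_neg, Real.sin_neg]
    all_goals
      first
      | ring1
      | linear_combination (Real.cos φ) * Real.sin_sq_add_cos_sq α
      | linear_combination (-Real.cos φ) * Real.sin_sq_add_cos_sq α
      | linear_combination (Real.sin φ) * Real.sin_sq_add_cos_sq α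
      | linear_combination (-Real.sin φ) * Real.sin_sq_add_cos_sq α
  · exact ⟨0, fun φ => by rw [add_zero, circVec_rotZ_nondeg α g h01]⟩

lemma circVec_periodic (g : V3) (φ : ℝ) : circVec g (φ + 2 * Real.pi) = circVec g φ := by
  unfold circVec
  rw [Real.cos_add_two_pi, Real.sin_add_two_pi]

lemma postV_periodic (v v₁ : V3) (φ χ : ℝ) :
    postV v v₁ (φ + 2 * Real.pi) χ = postV v v₁ φ χ := by
  unfold postV
  rw [circVec_periodic]

lemma postV1_periodic (v v₁ : V3) (φ χ : ℝ) :
    postV1 v v₁ (φ + 2 * Real.pi) χ = postV1 v v₁ φ χ := by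
  unfold postV1
  rw [circVec_periodic]

lemma postV_rotZ (α : ℝ) (v v₁ : V3) (σ φ χ : ℝ)
    (hσ : ∀ ψ : ℝ, circVec (rotZ α (v - v₁)) ψ = rotZ α (circVec (v - v₁) (ψ + σ))) :
    postV (rotZ α v) (rotZ α v₁) φ χ = rotZ α (postV v v₁ (φ + σ) χ) := by
  unfold postV
  rw [← rotZ_sub, enorm3_rotZ, hσ φ, ← rotZ_smul, ← rotZ_smul, ← rotZ_smul, ← rotZ_add,
    ← rotZ_sub]

lemma postV1_rotZ (α : ℝ) (v v₁ : V3) (σ φ χ : ℝ)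
    (hσ : ∀ ψ : ℝ, circVec (rotZ α (v - v₁)) ψ = rotZ α (circVec (v - v₁) (ψ + σ))) :
    postV1 (rotZ α v) (rotZ α v₁) φ χ = rotZ α (postV1 v v₁ (φ + σ) χ) := by
  unfold postV1
  rw [← rotZ_sub, enorm3_rotZ, hσ φ, ← rotZ_smul, ← rotZ_smul, ← rotZ_smul, ← rotZ_add,
    ← rotZ_add]

lemma postV_self (v : V3) (φ χ : ℝ) : postV v v φ χ = v := by
  unfold postV
  rw [sub_self]
  have h0 : enorm3 (0 : V3) = 0 := by simp [enorm3]
  rw [h0, zero_mul, zero_mul, zero_smul, sub_zero, ← add_smul]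
  rw [Real.cos_sq_add_sin_sq, one_smul]

lemma postV1_self (v : V3) (φ χ : ℝ) : postV1 v v φ χ = v := by
  unfold postV1
  rw [sub_self]
  have h0 : enorm3 (0 : V3) = 0 := by simp [enorm3]
  rw [h0, zero_mul, zero_mul, zero_smul, add_zero, ← add_smul]
  rw [Real.cos_sq_add_sin_sq, one_smul]

lemma collKer_self (B : ℝ → ℝ → ℝ) (f g : V3 → ℂ) (v : V3) (φ χ : ℝ) :
    collKer B f g v (v, φ, χ) = 0 := by
  unfold collKer
  simp only [postV_self, postV1_self]
  simp

lemma shift_int (H : ℝ → ℂ) (hp : ∀ x, H (x + 2 * Real.pi) = H x) (σ : ℝ) :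
    ∫ φ in (0:ℝ)..(2 * Real.pi), H (φ + σ) = ∫ φ in (0:ℝ)..(2 * Real.pi), H φ := by
  rw [intervalIntegral.integral_comp_add_right]
  have hper : Function.Periodic H (2 * Real.pi) := hp
  have h := hper.intervalIntegral_add_eq σ 0
  rw [show (0:ℝ) + σ = σ by ring, show (2 * Real.pi + σ) = σ + 2 * Real.pi by ring]
  simpa using h

lemma collKer_rotZ (B : ℝ → ℝ → ℝ) (l₁ : ℕ) (m₁ : ℤ) (n₁ : ℕ) (l₂ : ℕ) (m₂ : ℤ) (n₂ : ℕ)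
    (hm₁ : -(l₁ : ℤ) ≤ m₁ ∧ m₁ ≤ (l₁ : ℤ)) (hm₂ : -(l₂ : ℤ) ≤ m₂ ∧ m₂ ≤ (l₂ : ℤ))
    (α : ℝ) (v v₁ : V3) (σ φ χ : ℝ)
    (hσ : ∀ ψ : ℝ, circVec (rotZ α (v - v₁)) ψ = rotZ α (circVec (v - v₁) (ψ + σ))) :
    collKer B (phiB l₁ m₁ n₁) (phiB l₂ m₂ n₂) (rotZ α v) (rotZ α v₁, φ, χ)
      = Complex.exp (Complex.I * (((m₁ : ℂ) + (m₂ : ℂ))) * (α : ℂ)) *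
        collKer B (phiB l₁ m₁ n₁) (phiB l₂ m₂ n₂) v (v₁, φ + σ, χ) := by
  unfold collKer
  simp only
  rw [← rotZ_sub, enorm3_rotZ, postV_rotZ α v v₁ σ φ χ hσ, postV1_rotZ α v v₁ σ φ χ hσ]
  rw [phiB_rotZ α l₁ m₁ n₁ hm₁, phiB_rotZ α l₂ m₂ n₂ hm₂,
    phiB_rotZ α l₁ m₁ n₁ hm₁ v₁, phiB_rotZ α l₂ m₂ n₂ hm₂ v]
  rw [show Complex.I * (((m₁ : ℂ) + (m₂ : ℂ))) * (α : ℂ)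
    = Complex.I * (m₁ : ℂ) * (α : ℂ) + Complex.I * (m₂ : ℂ) * (α : ℂ) by ring]
  rw [Complex.exp_add]
  ring

lemma collQ_rotZ (B : ℝ → ℝ → ℝ) (l₁ : ℕ) (m₁ : ℤ) (n₁ : ℕ) (l₂ : ℕ) (m₂ : ℤ) (n₂ : ℕ)
    (hm₁ : -(l₁ : ℤ) ≤ m₁ ∧ m₁ ≤ (l₁ : ℤ)) (hm₂ : -(l₂ : ℤ) ≤ m₂ ∧ m₂ ≤ (l₂ : ℤ))
    (α : ℝ) (v : V3) :
    collQ B (phiB l₁ m₁ n₁) (phiB l₂ m₂ n₂) (rotZ α v)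
      = Complex.exp (Complex.I * (((m₁ : ℂ) + (m₂ : ℂ))) * (α : ℂ)) *
        collQ B (phiB l₁ m₁ n₁) (phiB l₂ m₂ n₂) v := by
  set ε := Complex.exp (Complex.I * (((m₁ : ℂ) + (m₂ : ℂ))) * (α : ℂ)) with hε
  unfold collQ
  rw [← (rotZ_measurePreserving α).integral_comp (rotZHomeo α).measurableEmbedding
    (fun v₁ : V3 => ∫ φ in (0:ℝ)..(2 * Real.pi), ∫ χ in (0:ℝ)..Real.pi,
      collKer B (phiB l₁ m₁ n₁) (phiB l₂ m₂ n₂) (rotZ α v) (v₁, φ, χ))]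
  rw [← MeasureTheory.integral_const_mul]
  congr 1
  funext v₁
  show (∫ φ in (0:ℝ)..(2 * Real.pi), ∫ χ in (0:ℝ)..Real.pi,
      collKer B (phiB l₁ m₁ n₁) (phiB l₂ m₂ n₂) (rotZ α v) (rotZ α v₁, φ, χ))
    = ε * ∫ φ in (0:ℝ)..(2 * Real.pi), ∫ χ in (0:ℝ)..Real.pi,
      collKer B (phiB l₁ m₁ n₁) (phiB l₂ m₂ n₂) v (v₁, φ, χ)
  by_cases hvv : v₁ = v
  · subst hvv
    have hr : ∀ φ χ : ℝ,
        collKer B (phiB l₁ m₁ n₁) (phiB l₂ m₂ n₂) (rotZ α v₁) (rotZ α v₁, φ, χ) = 0 :=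
      fun φ χ => collKer_self B _ _ (rotZ α v₁) φ χ
    simp only [hr, collKer_self, intervalIntegral.integral_zero, mul_zero]
  · have hgne : v - v₁ ≠ 0 := sub_ne_zero.mpr (fun h => hvv h.symm)
    obtain ⟨σ, hσ⟩ := circVec_shift α (v - v₁) hgne
    have hker : ∀ φ χ : ℝ,
        collKer B (phiB l₁ m₁ n₁) (phiB l₂ m₂ n₂) (rotZ α v) (rotZ α v₁, φ, χ)
          = ε * collKer B (phiB l₁ m₁ n₁) (phiB l₂ m₂ n₂) v (v₁, φ + σ, χ) :=
      fun φ χ => collKer_rotZ B l₁ m₁ n₁ l₂ m₂ n₂ hm₁ hm₂ α v v₁ σ φ χ hσ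
    have step1 : (∫ φ in (0:ℝ)..(2 * Real.pi), ∫ χ in (0:ℝ)..Real.pi,
        collKer B (phiB l₁ m₁ n₁) (phiB l₂ m₂ n₂) (rotZ α v) (rotZ α v₁, φ, χ))
      = ∫ φ in (0:ℝ)..(2 * Real.pi), ε * ∫ χ in (0:ℝ)..Real.pi,
        collKer B (phiB l₁ m₁ n₁) (phiB l₂ m₂ n₂) v (v₁, φ + σ, χ) := by
      apply intervalIntegral.integral_congr
      intro φ _
      simp only [hker]
      rw [intervalIntegral.integral_const_mul]
    rw [step1, intervalIntegral.integral_const_mul]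
    congr 1
    have hperiodic : ∀ x : ℝ, (fun ψ => ∫ χ in (0:ℝ)..Real.pi,
        collKer B (phiB l₁ m₁ n₁) (phiB l₂ m₂ n₂) v (v₁, ψ, χ)) (x + 2 * Real.pi)
        = (fun ψ => ∫ χ in (0:ℝ)..Real.pi,
        collKer B (phiB l₁ m₁ n₁) (phiB l₂ m₂ n₂) v (v₁, ψ, χ)) x := by
      intro x
      simp only
      apply intervalIntegral.integral_congr
      intro χ _
      unfold collKer
      simp only [postV_periodic, postV1_periodic]
    exact shift_int (fun ψ => ∫ χ in (0:ℝ)..Real.pi,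
      collKer B (phiB l₁ m₁ n₁) (phiB l₂ m₂ n₂) v (v₁, ψ, χ)) hperiodic σ

/-- Theorem 1, sparsity. If `m ≠ m₁ + m₂`, then the Burnett
expansion coefficient `A_{lmn}^{l₁m₁n₁,l₂m₂n₂}` of the collision operator vanishes. -/
theorem coefA_eq_zero_of_m_ne_add
    (B : ℝ → ℝ → ℝ) (hBmeas : Measurable (Function.uncurry B))
    (hBpos : ∀ r χ, 0 ≤ B r χ)
    (l n l₁ n₁ l₂ n₂ : ℕ) (m m₁ m₂ : ℤ)
    (hm : -(l : ℤ) ≤ m ∧ m ≤ (l : ℤ))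
    (hm₁ : -(l₁ : ℤ) ≤ m₁ ∧ m₁ ≤ (l₁ : ℤ))
    (hm₂ : -(l₂ : ℤ) ≤ m₂ ∧ m₂ ≤ (l₂ : ℤ))
    (hker : ∀ v : V3,
      IntegrableOn (collKer B (phiB l₁ m₁ n₁) (phiB l₂ m₂ n₂) v) collDom volume)
    (houter : Integrable (fun v : V3 =>
      (starRingEnd ℂ) (burnett l m n v) * collQ B (phiB l₁ m₁ n₁) (phiB l₂ m₂ n₂) v))
    (hne : m ≠ m₁ + m₂) :
    coefA B l m n l₁ m₁ n₁ l₂ m₂ n₂ = 0 := by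
  set d : ℤ := m₁ + m₂ - m with hd
  have hdne : d ≠ 0 := by
    rw [hd]
    intro h
    exact hne (by omega)
  have hdR : ((d : ℝ)) ≠ 0 := Int.cast_ne_zero.mpr hdne
  set α : ℝ := Real.pi / (d : ℝ) with hα
  set c : ℂ := coefA B l m n l₁ m₁ n₁ l₂ m₂ n₂ with hc
  have key : c = Complex.exp (Complex.I * (d : ℂ) * (α : ℂ)) * c := by
    rw [hc]
    unfold coefA
    conv_lhs => rw [← integral_rotZ α (fun v => (starRingEnd ℂ) (burnett l m n v) *
      collQ B (phiB l₁ m₁ n₁) (phiB l₂ m₂ n₂) v)]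
    rw [← MeasureTheory.integral_const_mul]
    congr 1
    funext v
    show (starRingEnd ℂ) (burnett l m n (rotZ α v)) *
        collQ B (phiB l₁ m₁ n₁) (phiB l₂ m₂ n₂) (rotZ α v)
      = Complex.exp (Complex.I * (d : ℂ) * (α : ℂ)) *
        ((starRingEnd ℂ) (burnett l m n v) * collQ B (phiB l₁ m₁ n₁) (phiB l₂ m₂ n₂) v)
    rw [burnett_rotZ α l m n hm v, collQ_rotZ B l₁ m₁ n₁ l₂ m₂ n₂ hm₁ hm₂ α v]
    rw [map_mul]
    have hconj : (starRingEnd ℂ) (Complex.exp (Complex.I * (m : ℂ) * (α : ℂ)))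
        = Complex.exp (-(Complex.I * (m : ℂ) * (α : ℂ))) := by
      rw [← Complex.exp_conj]
      congr 1
      simp [map_mul, Complex.conj_I, Complex.conj_ofReal]
    rw [hconj]
    rw [show Complex.I * (d : ℂ) * (α : ℂ)
        = -(Complex.I * (m : ℂ) * (α : ℂ)) + Complex.I * ((m₁ : ℂ) + (m₂ : ℂ)) * (α : ℂ) by
      rw [hd]; push_cast; ring]
    rw [Complex.exp_add]
    ring
  have hexp : Complex.exp (Complex.I * (d : ℂ) * (α : ℂ)) = -1 := by
    have hdC : ((d : ℤ) : ℂ) ≠ 0 := Int.cast_ne_zero.mpr hdne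
    have hαC : ((α : ℝ) : ℂ) = (Real.pi : ℂ) / ((d : ℤ) : ℂ) := by
      rw [hα]
      push_cast
      ring
    rw [hαC, show Complex.I * ((d : ℤ) : ℂ) * ((Real.pi : ℂ) / ((d : ℤ) : ℂ))
      = (Real.pi : ℂ) * Complex.I by field_simp]
    exact Complex.exp_pi_mul_I
  rw [hexp] at key
  have h2 : (2 : ℂ) * c = 0 := by linear_combination key
  have := mul_eq_zero.mp h2
  rcases this with h | h
  · norm_num at h
  · exact h

end
end

section
/- Every coefficient A_{lmn}^{l₁m₁n₁, l₂m₂n₂} = ∫_{ℝ³} conj(p_{lmn}(v)) Q[φ_{l₁m₁n₁}, φ_{l₂m₂n₂}](v) dv is a real number. -/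
noncomputable section

open MeasureTheory Real

namespace CoefAReal

/-- Reflection of the second coordinate. -/
def R3 (v : V3) : V3 := fun i => if i = 1 then -v i else v i

@[simp] lemma R3_apply_0 (v : V3) : R3 v 0 = v 0 := rfl
@[simp] lemma R3_apply_1 (v : V3) : R3 v 1 = -v 1 := rfl
@[simp] lemma R3_apply_2 (v : V3) : R3 v 2 = v 2 := rfl

lemma R3_involutive : Function.Involutive R3 := by
  intro v; funext i
  by_cases h : i = 1 <;> simp [R3, h]

@[simp] lemma R3_R3 (v : V3) : R3 (R3 v) = v := R3_involutive v

lemma R3_add (v w : V3) : R3 (v + w) = R3 v + R3 w := by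
  funext i; by_cases h : i = 1 <;> simp [R3, h] <;> ring

lemma R3_sub (v w : V3) : R3 (v - w) = R3 v - R3 w := by
  funext i; by_cases h : i = 1 <;> simp [R3, h] <;> ring

lemma R3_smul (a : ℝ) (v : V3) : R3 (a • v) = a • R3 v := by
  funext i; by_cases h : i = 1 <;> simp [R3, h]

lemma R3_neg (v : V3) : R3 (-v) = -R3 v := by
  funext i; by_cases h : i = 1 <;> simp [R3, h]

@[simp] lemma enorm3_R3 (v : V3) : enorm3 (R3 v) = enorm3 v := by
  simp [enorm3]

lemma nrm_R3 (v : V3) : nrm (R3 v) = R3 (nrm v) := by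
  rw [nrm, nrm, enorm3_R3, R3_smul]

lemma measurable_R3 : Measurable R3 := by
  apply measurable_pi_iff.mpr
  intro i
  unfold R3
  split_ifs
  · exact (measurable_pi_apply _).neg
  · exact measurable_pi_apply _

lemma measurePreserving_R3 : MeasurePreserving R3 (volume : Measure V3) volume := by
  have h : ∀ i : Fin 3, MeasurePreserving (fun x : ℝ => if i = 1 then -x else x)
      (volume : Measure ℝ) volume := by
    intro i
    split_ifs
    · exact Measure.measurePreserving_neg _
    · exact MeasurePreserving.id _
  exact measurePreserving_pi (fun _ => (volume : Measure ℝ)) (fun _ => volume) h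

/-- `R3` as a measurable equivalence. -/
def R3equiv : V3 ≃ᵐ V3 where
  toFun := R3
  invFun := R3
  left_inv := R3_involutive
  right_inv := R3_involutive
  measurable_toFun := measurable_R3
  measurable_invFun := measurable_R3

lemma integral_comp_R3 (f : V3 → ℂ) : ∫ v, f (R3 v) = ∫ v, f v :=
  measurePreserving_R3.integral_comp R3equiv.measurableEmbedding f


lemma exp_arg_conj (m : ℤ) (z : ℂ) :
    Complex.exp (Complex.I * (m : ℂ) * ((Complex.arg ((starRingEnd ℂ) z) : ℝ) : ℂ)) =
      Complex.exp (-(Complex.I * (m : ℂ) * ((Complex.arg z : ℝ) : ℂ))) := by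
  rw [Complex.arg_conj]
  split_ifs with h
  · rw [h, Complex.exp_eq_exp_iff_exists_int]
    exact ⟨m, by push_cast; ring⟩

  · rw [Complex.ofReal_neg]
    ring_nf

lemma conj_sphY (l : ℕ) (m : ℤ) (u : V3) :
    (starRingEnd ℂ) (sphY l m u) = sphY l m (R3 u) := by
  unfold sphY
  rw [map_mul, map_mul, Complex.conj_ofReal, Complex.conj_ofReal, R3_apply_2]
  congr 1
  have hz : ((R3 u 0 : ℝ) : ℂ) + ((R3 u 1 : ℝ) : ℂ) * Complex.I =
      (starRingEnd ℂ) (((u 0 : ℝ) : ℂ) + ((u 1 : ℝ) : ℂ) * Complex.I) := by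
    simp [map_add, map_mul, Complex.conj_ofReal, Complex.conj_I]
  rw [hz, ← Complex.exp_conj, exp_arg_conj]
  congr 1
  simp only [map_mul, Complex.conj_ofReal, Complex.conj_I, map_intCast]
  ring

lemma conj_burnett (l : ℕ) (m : ℤ) (n : ℕ) (v : V3) :
    (starRingEnd ℂ) (burnett l m n v) = burnett l m n (R3 v) := by
  unfold burnett
  rw [map_mul, map_mul, map_mul, Complex.conj_ofReal, Complex.conj_ofReal,
    Complex.conj_ofReal, conj_sphY, nrm_R3, enorm3_R3]

lemma conj_phiB (l : ℕ) (m : ℤ) (n : ℕ) (v : V3) :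
    (starRingEnd ℂ) (phiB l m n v) = phiB l m n (R3 v) := by
  unfold phiB maxwellian
  rw [map_mul, Complex.conj_ofReal, conj_burnett, enorm3_R3]


/-- The reflected circle angle. -/
def psiAng (g : V3) (φ : ℝ) : ℝ :=
  (if g 0 = 0 ∧ g 1 = 0 then 2 * Real.pi else Real.pi) - φ

lemma nrm_neg (w : V3) : nrm (-w) = -nrm w := by
  unfold nrm enorm3
  rw [show (-w) 0 = -(w 0) from rfl, show (-w) 1 = -(w 1) from rfl,
    show (-w) 2 = -(w 2) from rfl]
  ring_nf
  exact smul_neg _ _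

lemma cross3_R3 (a b : V3) : cross3 (R3 a) (R3 b) = -R3 (cross3 a b) := by
  funext i
  fin_cases i <;>
    simp [cross3, R3] <;> ring

lemma cross3_neg_right (a b : V3) : cross3 a (-b) = -cross3 a b := by
  funext i
  fin_cases i <;>
    simp [cross3] <;> ring

lemma circVec_R3 (g : V3) (φ : ℝ) : R3 (circVec g φ) = circVec (R3 g) (psiAng g φ) := by
  unfold circVec psiAng
  have hc : (R3 g 0 = 0 ∧ R3 g 1 = 0) ↔ (g 0 = 0 ∧ g 1 = 0) := by simp [neg_eq_zero]
  by_cases h : g 0 = 0 ∧ g 1 = 0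
  · have hg : R3 g = g := by
      funext i; by_cases hi : i = 1 <;> simp [R3, hi, h.2]
    have he1 : e1v g = ![1, 0, 0] := if_pos h
    have hr1 : R3 (e1v g) = e1v g := by
      rw [he1]; funext i; fin_cases i <;> simp [R3]
    have hr2 : R3 (e2v g) = -e2v g := by
      funext i; fin_cases i <;>
        simp [e2v, cross3, he1, nrm, R3, h.1, h.2]
    rw [if_pos h, hg, R3_add, R3_smul, R3_smul, hr1, hr2, Real.cos_sub, Real.sin_sub,
      Real.cos_two_pi, Real.sin_two_pi]
    module
  · have he1 : e1v (R3 g) = -R3 (e1v g) := by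
      rw [e1v, e1v, if_neg (fun hh => h (hc.mp hh)), if_neg h]
      have h1 : ![-(R3 g 1), R3 g 0, 0] = -(R3 ![-(g 1), g 0, 0]) := by
        funext i; fin_cases i <;> simp [R3]
      rw [h1, nrm_neg, nrm_R3]
    have he2 : e2v (R3 g) = R3 (e2v g) := by
      rw [e2v, e2v, he1, nrm_R3, cross3_neg_right, cross3_R3, neg_neg]
    rw [if_neg h, R3_add, R3_smul, R3_smul, he1, he2, Real.cos_pi_sub, Real.sin_pi_sub]
    module

lemma postV_R3 (v v₁ : V3) (φ χ : ℝ) :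
    R3 (postV v v₁ φ χ) = postV (R3 v) (R3 v₁) (psiAng (v - v₁) φ) χ := by
  unfold postV
  have hs : R3 v - R3 v₁ = R3 (v - v₁) := (R3_sub v v₁).symm
  rw [R3_sub, R3_add, R3_smul, R3_smul, R3_smul, circVec_R3, hs, enorm3_R3]

lemma postV1_R3 (v v₁ : V3) (φ χ : ℝ) :
    R3 (postV1 v v₁ φ χ) = postV1 (R3 v) (R3 v₁) (psiAng (v - v₁) φ) χ := by
  unfold postV1
  have hs : R3 v - R3 v₁ = R3 (v - v₁) := (R3_sub v v₁).symm
  rw [R3_add, R3_add, R3_smul, R3_smul, R3_smul, circVec_R3, hs, enorm3_R3]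


lemma conj_collKer (B : ℝ → ℝ → ℝ) (l₁ : ℕ) (m₁ : ℤ) (n₁ : ℕ) (l₂ : ℕ) (m₂ : ℤ) (n₂ : ℕ)
    (v v₁ : V3) (φ χ : ℝ) :
    (starRingEnd ℂ) (collKer B (phiB l₁ m₁ n₁) (phiB l₂ m₂ n₂) v (v₁, φ, χ)) =
      collKer B (phiB l₁ m₁ n₁) (phiB l₂ m₂ n₂) (R3 v) (R3 v₁, psiAng (v - v₁) φ, χ) := by
  unfold collKer
  simp only [map_mul, map_sub, Complex.conj_ofReal, conj_phiB]
  rw [postV_R3, postV1_R3]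
  rw [show R3 v - R3 v₁ = R3 (v - v₁) from (R3_sub v v₁).symm, enorm3_R3]

lemma circVec_per (g : V3) (φ : ℝ) : circVec g (φ + 2 * Real.pi) = circVec g φ := by
  unfold circVec
  rw [Real.cos_add_two_pi, Real.sin_add_two_pi]

lemma collKer_per (B : ℝ → ℝ → ℝ) (f g : V3 → ℂ) (w w₁ : V3) (φ χ : ℝ) :
    collKer B f g w (w₁, φ + 2 * Real.pi, χ) = collKer B f g w (w₁, φ, χ) := by
  unfold collKer postV postV1
  rw [circVec_per]

lemma intervalIntegral_conj (f : ℝ → ℂ) (a b : ℝ) :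
    ∫ x in a..b, (starRingEnd ℂ) (f x) = (starRingEnd ℂ) (∫ x in a..b, f x) := by
  unfold intervalIntegral
  rw [integral_conj, integral_conj, ← map_sub]

lemma reflect_integral (K : ℝ → ℂ) (hper : ∀ x, K (x + 2 * Real.pi) = K x) (c : ℝ) :
    ∫ φ in (0:ℝ)..(2 * Real.pi), K (c - φ) = ∫ φ in (0:ℝ)..(2 * Real.pi), K φ := by
  rw [intervalIntegral.integral_comp_sub_left K c]
  have hp : Function.Periodic K (2 * Real.pi) := hper
  have h := hp.intervalIntegral_add_eq (c - 2 * Real.pi) 0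
  have h1 : c - 2 * Real.pi + 2 * Real.pi = c - 0 := by ring
  have h2 : (0:ℝ) + 2 * Real.pi = 2 * Real.pi := by ring
  rw [h1, h2] at h
  rw [show c - 0 = c from by ring] at h ⊢
  exact h

lemma conj_collQ (B : ℝ → ℝ → ℝ) (l₁ : ℕ) (m₁ : ℤ) (n₁ : ℕ) (l₂ : ℕ) (m₂ : ℤ) (n₂ : ℕ)
    (v : V3) :
    (starRingEnd ℂ) (collQ B (phiB l₁ m₁ n₁) (phiB l₂ m₂ n₂) v) =
      collQ B (phiB l₁ m₁ n₁) (phiB l₂ m₂ n₂) (R3 v) := by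
  unfold collQ
  rw [← integral_conj, ← integral_comp_R3 (fun v₁ => ∫ φ in (0:ℝ)..(2 * Real.pi),
    ∫ χ in (0:ℝ)..Real.pi, collKer B (phiB l₁ m₁ n₁) (phiB l₂ m₂ n₂) (R3 v) (v₁, φ, χ))]
  congr 1
  funext v₁
  set K : ℝ → ℂ := fun φ => ∫ χ in (0:ℝ)..Real.pi,
    collKer B (phiB l₁ m₁ n₁) (phiB l₂ m₂ n₂) (R3 v) (R3 v₁, φ, χ) with hK
  have hper : ∀ x, K (x + 2 * Real.pi) = K x := by
    intro x
    apply intervalIntegral.integral_congr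
    intro χ _
    exact collKer_per _ _ _ _ _ _ _
  have h1 : ∀ φ : ℝ, (starRingEnd ℂ) (∫ χ in (0:ℝ)..Real.pi,
      collKer B (phiB l₁ m₁ n₁) (phiB l₂ m₂ n₂) v (v₁, φ, χ)) = K (psiAng (v - v₁) φ) := by
    intro φ
    rw [← intervalIntegral_conj]
    apply intervalIntegral.integral_congr
    intro χ _
    exact conj_collKer B l₁ m₁ n₁ l₂ m₂ n₂ v v₁ φ χ
  calc (starRingEnd ℂ) (∫ φ in (0:ℝ)..(2 * Real.pi), ∫ χ in (0:ℝ)..Real.pi,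
        collKer B (phiB l₁ m₁ n₁) (phiB l₂ m₂ n₂) v (v₁, φ, χ))
      = ∫ φ in (0:ℝ)..(2 * Real.pi), K (psiAng (v - v₁) φ) := by
        rw [← intervalIntegral_conj]
        exact intervalIntegral.integral_congr (fun φ _ => h1 φ)
    _ = ∫ φ in (0:ℝ)..(2 * Real.pi),
          K ((if (v - v₁) 0 = 0 ∧ (v - v₁) 1 = 0 then 2 * Real.pi else Real.pi) - φ) := rfl
    _ = ∫ φ in (0:ℝ)..(2 * Real.pi), K φ := reflect_integral K hper _
    _ = _ := rfl

end CoefAReal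


/-- Theorem 3. Every coefficient `A_{lmn}^{l₁m₁n₁,l₂m₂n₂}`
is a real number. -/
theorem coefA_is_real
    (B : ℝ → ℝ → ℝ) (hBmeas : Measurable (Function.uncurry B))
    (hBpos : ∀ r χ, 0 ≤ B r χ)
    (l n l₁ n₁ l₂ n₂ : ℕ) (m m₁ m₂ : ℤ)
    (hm : -(l : ℤ) ≤ m ∧ m ≤ (l : ℤ))
    (hm₁ : -(l₁ : ℤ) ≤ m₁ ∧ m₁ ≤ (l₁ : ℤ))
    (hm₂ : -(l₂ : ℤ) ≤ m₂ ∧ m₂ ≤ (l₂ : ℤ))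
    (hker : ∀ v : V3,
      IntegrableOn (collKer B (phiB l₁ m₁ n₁) (phiB l₂ m₂ n₂) v) collDom volume)
    (houter : Integrable (fun v : V3 =>
      (starRingEnd ℂ) (burnett l m n v) * collQ B (phiB l₁ m₁ n₁) (phiB l₂ m₂ n₂) v)) :
    (coefA B l m n l₁ m₁ n₁ l₂ m₂ n₂).im = 0 := by
  rw [← Complex.conj_eq_iff_im]
  unfold coefA
  rw [← integral_conj, ← CoefAReal.integral_comp_R3 (fun v =>
    (starRingEnd ℂ) (burnett l m n v) * collQ B (phiB l₁ m₁ n₁) (phiB l₂ m₂ n₂) v)]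
  congr 1
  funext v
  rw [map_mul, Complex.conj_conj, CoefAReal.conj_collQ, CoefAReal.conj_burnett,
    CoefAReal.R3_R3]

end
end

section
/- If l + m − k₃ is odd, then the connection coefficient C_{lmn}^{k₁k₂k₃} = ∫_{ℝ³} p_{lmn}(v) H^{k₁k₂k₃}(v) M(v) dv equals zero; that is, C_{lmn}^{k₁k₂k₃} is nonzero only if (l + m) − k₃ is even. -/
noncomputable section

open MeasureTheory Real

/-! ### Auxiliary lemmas for the parity argument -/

/-- Reflection of the third coordinate. -/
def S3 (v : V3) : V3 := fun i => if i = 2 then -(v i) else v i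

@[simp] lemma S3_0 (v : V3) : S3 v 0 = v 0 := if_neg (by decide)
@[simp] lemma S3_1 (v : V3) : S3 v 1 = v 1 := if_neg (by decide)
@[simp] lemma S3_2 (v : V3) : S3 v 2 = -(v 2) := if_pos rfl

lemma S3_invol (v : V3) : S3 (S3 v) = v := by
  funext i; by_cases h : i = 2 <;> simp [S3, h]

lemma S3_meas : Measurable S3 := by
  apply measurable_pi_lambda
  intro i
  unfold S3
  by_cases h : i = 2
  · simp only [h, if_true]
    exact (measurable_pi_apply 2).neg
  · simp only [h, if_false]
    exact measurable_pi_apply i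

def S3e : V3 ≃ᵐ V3 where
  toFun := S3
  invFun := S3
  left_inv := S3_invol
  right_inv := S3_invol
  measurable_toFun := S3_meas
  measurable_invFun := S3_meas

lemma S3_mp : MeasurePreserving S3 (volume : Measure V3) (volume : Measure V3) := by
  have := measurePreserving_pi (fun _ : Fin 3 => (volume : Measure ℝ))
    (fun _ : Fin 3 => (volume : Measure ℝ))
    (f := fun i x => if i = 2 then -x else x) (fun i => ?_)
  · exact this
  · by_cases h : i = 2 <;> simp [h]
    · exact Measure.measurePreserving_neg volume
    · exact MeasurePreserving.id volume

lemma iterderiv_const_mul (c : ℝ) (g : ℝ → ℝ) (n : ℕ) (x : ℝ) :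
    iteratedDeriv n (fun y => c * g y) x = c * iteratedDeriv n g x := by
  induction n generalizing g x with
  | zero => simp
  | succ n ih =>
    rw [iteratedDeriv_succ', iteratedDeriv_succ']
    have : deriv (fun y => c * g y) = fun y => c * deriv g y :=
      funext fun y => deriv_const_mul_field c
    rw [this, ih]

lemma iterderiv_even (f : ℝ → ℝ) (hf : ∀ y, f (-y) = f y) (n : ℕ) (x : ℝ) :
    iteratedDeriv n f (-x) = (-1 : ℝ) ^ n * iteratedDeriv n f x := by
  have h := iteratedDeriv_comp_neg n f x
  rw [funext hf, smul_eq_mul] at h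
  rw [h, ← mul_assoc, ← pow_add, Even.neg_one_pow ⟨n, rfl⟩, one_mul]

lemma enorm3_S3 (v : V3) : enorm3 (S3 v) = enorm3 v := by
  simp [enorm3, neg_sq]

lemma maxwellian_S3 (v : V3) : maxwellian (S3 v) = maxwellian v := by
  simp [maxwellian, enorm3_S3]

lemma nrm_S3 (v : V3) : nrm (S3 v) = S3 (nrm v) := by
  unfold nrm
  rw [enorm3_S3]
  funext i
  by_cases h : i = 2 <;> simp [S3, h, mul_neg]

lemma assocLegendre_neg (l : ℕ) (m : ℤ) (x : ℝ) :
    assocLegendre l m (-x)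
      = (-1 : ℝ) ^ ((l : ℤ) + m).toNat * assocLegendre l m x := by
  unfold assocLegendre
  rw [neg_sq, iterderiv_even _ (fun y => by rw [neg_sq]) _ x]
  ring

lemma sphY_S3 (l : ℕ) (m : ℤ) (u : V3) :
    sphY l m (S3 u) = (((-1 : ℝ) ^ ((l : ℤ) + m).toNat : ℝ) : ℂ) * sphY l m u := by
  unfold sphY
  rw [S3_0, S3_1, S3_2, assocLegendre_neg]
  push_cast
  ring

lemma burnett_S3 (l : ℕ) (m : ℤ) (n : ℕ) (v : V3) :
    burnett l m n (S3 v)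
      = (((-1 : ℝ) ^ ((l : ℤ) + m).toNat : ℝ) : ℂ) * burnett l m n v := by
  unfold burnett
  rw [enorm3_S3, nrm_S3, sphY_S3]
  ring

lemma hermite3_S3 (k₁ k₂ k₃ : ℕ) (v : V3) :
    hermite3 k₁ k₂ k₃ (S3 v) = (-1 : ℝ) ^ k₃ * hermite3 k₁ k₂ k₃ v := by
  unfold hermite3
  rw [maxwellian_S3, S3_0, S3_1, S3_2]
  have hz : ∀ x y : ℝ,
      iteratedDeriv k₃ (fun z => maxwellian ![x, y, z]) (-(v 2))
        = (-1 : ℝ) ^ k₃ * iteratedDeriv k₃ (fun z => maxwellian ![x, y, z]) (v 2) := by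
    intro x y
    apply iterderiv_even
    intro z
    simp [maxwellian, enorm3, neg_sq]
  simp only [hz, iterderiv_const_mul]
  ring

/-- If `l + m - k₃` is odd, then the connection coefficient
`C_{lmn}^{k₁k₂k₃}` vanishes; i.e. `C_{lmn}^{k₁k₂k₃}` is nonzero only if
`(l + m) - k₃` is even. -/
theorem connC_eq_zero_of_odd (l n k₁ k₂ k₃ : ℕ) (m : ℤ)
    (hml : -(l : ℤ) ≤ m) (hmu : m ≤ (l : ℤ))
    (hodd : Odd ((l : ℤ) + m - (k₃ : ℤ))) :
    connC l m n k₁ k₂ k₃ = 0 := by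
  set N : ℕ := ((l : ℤ) + m).toNat with hN
  have hNz : ((N : ℤ)) = (l : ℤ) + m := Int.toNat_of_nonneg (by omega)
  have hodd' : Odd (N + k₃) := by
    obtain ⟨t, ht⟩ := hodd
    have h2 : Odd ((N + k₃ : ℕ) : ℤ) := ⟨t + k₃, by push_cast; omega⟩
    exact (Int.odd_coe_nat (N + k₃)).mp h2
  have key : ∀ v : V3,
      burnett l m n (S3 v) * ((hermite3 k₁ k₂ k₃ (S3 v) : ℝ) : ℂ) *
          ((maxwellian (S3 v) : ℝ) : ℂ)
        = -(burnett l m n v * ((hermite3 k₁ k₂ k₃ v : ℝ) : ℂ) *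
            ((maxwellian v : ℝ) : ℂ)) := by
    intro v
    rw [burnett_S3, hermite3_S3, maxwellian_S3]
    have hneg : ((-1 : ℂ)) ^ (N + k₃) = -1 := Odd.neg_one_pow hodd'
    push_cast
    rw [← hN]
    calc ((-1 : ℂ)) ^ N * burnett l m n v * ((-1 : ℂ) ^ k₃ * (hermite3 k₁ k₂ k₃ v : ℂ)) *
          (maxwellian v : ℂ)
        = (-1 : ℂ) ^ (N + k₃) *
            (burnett l m n v * (hermite3 k₁ k₂ k₃ v : ℂ) * (maxwellian v : ℂ)) := by
          rw [pow_add]; ring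
      _ = _ := by rw [hneg]; ring
  have hcomp := S3_mp.integral_comp S3e.measurableEmbedding
    (fun v : V3 => burnett l m n v * ((hermite3 k₁ k₂ k₃ v : ℝ) : ℂ) *
      ((maxwellian v : ℝ) : ℂ))
  have hC : connC l m n k₁ k₂ k₃
      = ∫ v : V3, burnett l m n (S3 v) * ((hermite3 k₁ k₂ k₃ (S3 v) : ℝ) : ℂ) *
          ((maxwellian (S3 v) : ℝ) : ℂ) := by
    simp only [connC]; exact hcomp.symm
  have hC2 : connC l m n k₁ k₂ k₃ = -connC l m n k₁ k₂ k₃ := by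
    conv_lhs => rw [hC]
    simp only [key]
    rw [integral_neg]
    rfl
  linear_combination hC2 / 2

end
end

section
/- Let f: ℝ³ → ℝ be integrable with ∫_{ℝ³} f(v) dv = 1, ∫_{ℝ³} v f(v) dv = 0, ∫_{ℝ³} |v|² f(v) dv = 3, and with finite third moments, and let f̃_{lmn} = ∫_{ℝ³} conj(p_{lmn}(v)) f(v) dv. Define the heat flux q_i = (1/2)∫_{ℝ³} |v|² v_i f(v) dv and the stress tensor σ_{ij} = ∫_{ℝ³} (v_i v_j − (1/3)δ_{ij}|v|²) f(v) dv for i, j = 1, 2, 3. Then q₁ = √5 Re(f̃_{111}), q₂ = −√5 Im(f̃_{111}), q₃ = −√(5/2) f̃_{101}, σ₁₁ = √2 Re(f̃_{220}) − f̃_{200}/√3, σ₁₂ = −√2 Im(f̃_{220}), σ₁₃ = −√2 Re(f̃_{210}), σ₂₂ = −√2 Re(f̃_{220}) − f̃_{200}/√3, σ₂₃ = √2 Im(f̃_{210}), and σ₃₃ = 2 f̃_{200}/√3. -/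
noncomputable section

open MeasureTheory Real

/-- The heat flux `q_i = (1/2) ∫ |v|² v_i f(v) dv`. -/
def heatFlux (f : V3 → ℝ) (i : Fin 3) : ℝ :=
  (1 / 2) * ∫ v : V3, enorm3 v ^ 2 * v i * f v

/-- The stress tensor `σ_{ij} = ∫ (v_i v_j - δ_{ij} |v|²/3) f(v) dv`. -/
def stress (f : V3 → ℝ) (i j : Fin 3) : ℝ :=
  ∫ v : V3, (v i * v j - (if i = j then 1 else 0) * enorm3 v ^ 2 / 3) * f v

lemma G32 : Real.Gamma (3/2) = Real.sqrt Real.pi / 2 := by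
  have := Real.Gamma_add_one (by norm_num : (1/2:ℝ) ≠ 0)
  rw [show (3/2:ℝ) = 1/2 + 1 by norm_num, this, Real.Gamma_one_half_eq]; ring

lemma G52 : Real.Gamma (5/2) = 3/4 * Real.sqrt Real.pi := by
  have := Real.Gamma_add_one (by norm_num : (3/2:ℝ) ≠ 0)
  rw [show (5/2:ℝ) = 3/2 + 1 by norm_num, this, G32]; ring

lemma G72 : Real.Gamma (7/2) = 15/8 * Real.sqrt Real.pi := by
  have := Real.Gamma_add_one (by norm_num : (5/2:ℝ) ≠ 0)
  rw [show (7/2:ℝ) = 5/2 + 1 by norm_num, this, G52]; ring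


lemma d_l1 : deriv (fun y:ℝ => (y^2-1)^(1:ℕ)) = fun y => 2*y := by
  funext x
  have h : HasDerivAt (fun y:ℝ => (y^2-1)^(1:ℕ)) (2*x) x := by
    have heq : (fun y:ℝ => (y^2-1)^(1:ℕ)) = fun y:ℝ => y^2 - 1 := by funext y; ring
    rw [heq]
    have h1 := (hasDerivAt_pow 2 x).sub_const 1
    exact h1.congr_deriv (by norm_num)
  exact h.deriv

lemma d_l1' : deriv (fun y:ℝ => 2*y) = fun _ => (2:ℝ) := by
  funext x
  have h : HasDerivAt (fun y:ℝ => 2*y) 2 x := by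
    simpa using (hasDerivAt_id x).const_mul 2
  exact h.deriv

lemma itd1_l1 (x:ℝ) : iteratedDeriv 1 (fun y:ℝ => (y^2-1)^(1:ℕ)) x = 2*x := by
  rw [iteratedDeriv_one, d_l1]

lemma itd2_l1 (x:ℝ) : iteratedDeriv 2 (fun y:ℝ => (y^2-1)^(1:ℕ)) x = 2 := by
  rw [show (2:ℕ) = 1+1 from rfl, iteratedDeriv_succ', d_l1, iteratedDeriv_one, d_l1']

lemma d_l2 : deriv (fun y:ℝ => (y^2-1)^(2:ℕ)) = fun y => 4*y^3 - 4*y := by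
  funext x
  have h : HasDerivAt (fun y:ℝ => (y^2-1)^(2:ℕ)) (4*x^3-4*x) x := by
    have heq : (fun y:ℝ => (y^2-1)^(2:ℕ)) = fun y:ℝ => y^4 - 2*y^2 + 1 := by funext y; ring
    rw [heq]
    have h1 := (((hasDerivAt_pow 4 x).sub ((hasDerivAt_pow 2 x).const_mul 2)).add_const 1)
    exact h1.congr_deriv (by norm_num; ring)
  exact h.deriv

lemma d_l2b : deriv (fun y:ℝ => 4*y^3 - 4*y) = fun y => 12*y^2 - 4 := by
  funext x
  have h : HasDerivAt (fun y:ℝ => 4*y^3-4*y) (12*x^2-4) x := by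
    have h1 := ((hasDerivAt_pow 3 x).const_mul 4).sub ((hasDerivAt_id x).const_mul 4)
    exact h1.congr_deriv (by norm_num; ring)
  exact h.deriv

lemma d_l2c : deriv (fun y:ℝ => 12*y^2 - 4) = fun y => 24*y := by
  funext x
  have h : HasDerivAt (fun y:ℝ => 12*y^2-4) (24*x) x := by
    have h1 := ((hasDerivAt_pow 2 x).const_mul 12).sub_const 4
    exact h1.congr_deriv (by norm_num; ring)
  exact h.deriv

lemma d_l2d : deriv (fun y:ℝ => 24*y) = fun _ => (24:ℝ) := by
  funext x
  have h : HasDerivAt (fun y:ℝ => 24*y) 24 x := by simpa using (hasDerivAt_id x).const_mul 24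
  exact h.deriv

lemma itd2_l2 (x:ℝ) : iteratedDeriv 2 (fun y:ℝ => (y^2-1)^(2:ℕ)) x = 12*x^2 - 4 := by
  show iteratedDeriv (1+1) (fun y:ℝ => (y^2-1)^(2:ℕ)) x = _
  rw [iteratedDeriv_succ', d_l2, iteratedDeriv_one, d_l2b]

lemma itd3_l2 (x:ℝ) : iteratedDeriv 3 (fun y:ℝ => (y^2-1)^(2:ℕ)) x = 24*x := by
  show iteratedDeriv (1+1+1) (fun y:ℝ => (y^2-1)^(2:ℕ)) x = _
  rw [iteratedDeriv_succ', d_l2, iteratedDeriv_succ', d_l2b, iteratedDeriv_one, d_l2c]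

lemma itd4_l2 (x:ℝ) : iteratedDeriv 4 (fun y:ℝ => (y^2-1)^(2:ℕ)) x = 24 := by
  show iteratedDeriv (1+1+1+1) (fun y:ℝ => (y^2-1)^(2:ℕ)) x = _
  rw [iteratedDeriv_succ', d_l2, iteratedDeriv_succ', d_l2b, iteratedDeriv_succ', d_l2c,
    iteratedDeriv_one, d_l2d]
lemma lag0 (x:ℝ) : laguerreL 0 (5/2) x = 1 := by
  have h72 : Real.Gamma ((0:ℕ) + (5/2:ℝ) + 1) = 15/8 * Real.sqrt Real.pi := by
    rw [show ((0:ℕ) + (5/2:ℝ) + 1) = 7/2 by push_cast; ring, G72]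
  simp [laguerreL, h72]
  exact (Real.Gamma_pos_of_pos (by norm_num)).ne'

lemma lag1 (x:ℝ) : laguerreL 1 (3/2) x = 5/2 - x := by
  unfold laguerreL
  rw [Finset.sum_range_succ, Finset.sum_range_succ, Finset.sum_range_zero]
  have h1 : ((1:ℕ):ℝ) + (3/2:ℝ) + 1 = 7/2 := by push_cast; ring
  have h0 : ((0:ℕ):ℝ) + (3/2:ℝ) + 1 = 5/2 := by push_cast; ring
  have h1' : ((1:ℕ):ℝ) + (3/2:ℝ) + 1 = 7/2 := h1
  rw [h1, h0]
  have hpi := Real.sqrt_pos.mpr Real.pi_pos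
  simp [G72, G52, Nat.factorial]
  field_simp
  ring
lemma aL10 (x:ℝ) : assocLegendre 1 0 x = x := by
  unfold assocLegendre
  norm_num
  ring

lemma aL11 (x:ℝ) : assocLegendre 1 1 x = -((1-x^2) ^ ((1:ℝ)/2)) := by
  unfold assocLegendre
  simp only [show (((1:ℕ):ℤ)+1).toNat = 2 by decide]
  rw [itd2_l1]
  rw [show ((1:ℤ):ℝ)/2 = (1:ℝ)/2 by norm_num]
  norm_num
  ring

lemma aL20 (x:ℝ) : assocLegendre 2 0 x = (3*x^2-1)/2 := by
  unfold assocLegendre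
  simp only [show (((2:ℕ):ℤ)+0).toNat = 2 by decide]
  rw [itd2_l2]
  norm_num [Nat.factorial]
  ring

lemma aL21 (x:ℝ) : assocLegendre 2 1 x = -(3*x) * (1-x^2) ^ ((1:ℝ)/2) := by
  unfold assocLegendre
  simp only [show (((2:ℕ):ℤ)+1).toNat = 3 by decide]
  rw [itd3_l2]
  rw [show ((1:ℤ):ℝ)/2 = (1:ℝ)/2 by norm_num]
  norm_num [Nat.factorial]
  ring

lemma aL22 (x:ℝ) : assocLegendre 2 2 x = 3 * (1-x^2) := by
  unfold assocLegendre
  simp only [show (((2:ℕ):ℤ)+2).toNat = 4 by decide]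
  rw [itd4_l2]
  rw [show ((2:ℤ):ℝ)/2 = (1:ℝ) by norm_num, Real.rpow_one]
  norm_num [Nat.factorial]
  ring
lemma key1 (a b : ℝ) :
    ((Real.sqrt (a^2+b^2) : ℝ):ℂ) *
      Complex.exp ((Complex.arg ((a:ℂ)+(b:ℂ)*Complex.I) :ℂ) * Complex.I)
      = (a:ℂ)+(b:ℂ)*Complex.I := by
  rw [← Complex.norm_add_mul_I]
  exact Complex.norm_mul_exp_arg_mul_I _

lemma sphY11 (u : V3) (hu : u 0^2 + u 1^2 + u 2^2 = 1) :
    sphY 1 1 u = -(Real.sqrt (3/(8*Real.pi)) : ℂ) * ((u 0:ℂ) + (u 1:ℂ)*Complex.I) := by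
  unfold sphY
  simp only [show (((1:ℕ):ℤ)-1).toNat = 0 by decide, show (((1:ℕ):ℤ)+1).toNat = 2 by decide]
  have hC : (2 * ((1:ℕ):ℝ) + 1) / (4 * Real.pi) *
      ((Nat.factorial 0 : ℝ) / (Nat.factorial 2 : ℝ)) = 3/(8*Real.pi) := by
    have := Real.pi_ne_zero
    norm_num [Nat.factorial]
    field_simp
    ring
  rw [hC, aL11]
  have he : Complex.I * (((1:ℤ)):ℂ) * (Complex.arg ((u 0:ℂ)+(u 1:ℂ)*Complex.I) : ℂ)
      = (Complex.arg ((u 0:ℂ)+(u 1:ℂ)*Complex.I):ℂ) * Complex.I := by push_cast; ring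
  rw [he]
  have h12 : (1:ℝ) - (u 2)^2 = u 0^2 + u 1^2 := by linarith
  rw [h12, show ((u 0:ℝ)^2 + u 1^2) ^ ((1:ℝ)/2) = Real.sqrt (u 0^2 + u 1^2) from
    (Real.sqrt_eq_rpow _).symm]
  push_cast
  rw [show (Real.sqrt (3/(8*Real.pi)) : ℂ) * -(Real.sqrt (u 0^2+u 1^2) : ℂ) *
      Complex.exp ((Complex.arg ((u 0:ℂ)+(u 1:ℂ)*Complex.I):ℂ) * Complex.I)
      = -(Real.sqrt (3/(8*Real.pi)) : ℂ) * ((Real.sqrt (u 0^2+u 1^2):ℂ) *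
        Complex.exp ((Complex.arg ((u 0:ℂ)+(u 1:ℂ)*Complex.I):ℂ) * Complex.I)) by ring,
    key1]
lemma sphY10 (u : V3) :
    sphY 1 0 u = (Real.sqrt (3/(4*Real.pi)) : ℂ) * (u 2:ℂ) := by
  unfold sphY
  simp only [show (((1:ℕ):ℤ)-0).toNat = 1 by decide, show (((1:ℕ):ℤ)+0).toNat = 1 by decide]
  have hC : (2 * ((1:ℕ):ℝ) + 1) / (4 * Real.pi) *
      ((Nat.factorial 1 : ℝ) / (Nat.factorial 1 : ℝ)) = 3/(4*Real.pi) := by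
    norm_num [Nat.factorial]
  rw [hC, aL10]
  have he : Complex.I * (((0:ℤ)):ℂ) * (Complex.arg ((u 0:ℂ)+(u 1:ℂ)*Complex.I) : ℂ)
      = 0 := by push_cast; ring
  rw [he, Complex.exp_zero, mul_one]

lemma sphY20 (u : V3) :
    sphY 2 0 u = (Real.sqrt (5/(4*Real.pi)) : ℂ) * (((3*(u 2)^2 - 1)/2 : ℝ):ℂ) := by
  unfold sphY
  simp only [show (((2:ℕ):ℤ)-0).toNat = 2 by decide, show (((2:ℕ):ℤ)+0).toNat = 2 by decide]
  have hC : (2 * ((2:ℕ):ℝ) + 1) / (4 * Real.pi) *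
      ((Nat.factorial 2 : ℝ) / (Nat.factorial 2 : ℝ)) = 5/(4*Real.pi) := by
    norm_num [Nat.factorial]
  rw [hC, aL20]
  have he : Complex.I * (((0:ℤ)):ℂ) * (Complex.arg ((u 0:ℂ)+(u 1:ℂ)*Complex.I) : ℂ)
      = 0 := by push_cast; ring
  rw [he, Complex.exp_zero, mul_one]

lemma sphY21 (u : V3) (hu : u 0^2 + u 1^2 + u 2^2 = 1) :
    sphY 2 1 u = -(3:ℂ) * (Real.sqrt (5/(24*Real.pi)) : ℂ) * (u 2:ℂ) *
      ((u 0:ℂ) + (u 1:ℂ)*Complex.I) := by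
  unfold sphY
  simp only [show (((2:ℕ):ℤ)-1).toNat = 1 by decide, show (((2:ℕ):ℤ)+1).toNat = 3 by decide]
  have hC : (2 * ((2:ℕ):ℝ) + 1) / (4 * Real.pi) *
      ((Nat.factorial 1 : ℝ) / (Nat.factorial 3 : ℝ)) = 5/(24*Real.pi) := by
    have := Real.pi_ne_zero
    norm_num [Nat.factorial]
    field_simp
    ring
  rw [hC, aL21]
  have he : Complex.I * (((1:ℤ)):ℂ) * (Complex.arg ((u 0:ℂ)+(u 1:ℂ)*Complex.I) : ℂ)
      = (Complex.arg ((u 0:ℂ)+(u 1:ℂ)*Complex.I):ℂ) * Complex.I := by push_cast; ring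
  rw [he]
  have h12 : (1:ℝ) - (u 2)^2 = u 0^2 + u 1^2 := by linarith
  rw [h12, show ((u 0:ℝ)^2 + u 1^2) ^ ((1:ℝ)/2) = Real.sqrt (u 0^2 + u 1^2) from
    (Real.sqrt_eq_rpow _).symm]
  push_cast
  rw [show (Real.sqrt (5/(24*Real.pi)) : ℂ) *
      (-(3*(u 2:ℂ)) * (Real.sqrt (u 0^2+u 1^2) : ℂ)) *
      Complex.exp ((Complex.arg ((u 0:ℂ)+(u 1:ℂ)*Complex.I):ℂ) * Complex.I)
      = -(3:ℂ) * (Real.sqrt (5/(24*Real.pi)) : ℂ) * (u 2:ℂ) *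
        ((Real.sqrt (u 0^2+u 1^2):ℂ) *
        Complex.exp ((Complex.arg ((u 0:ℂ)+(u 1:ℂ)*Complex.I):ℂ) * Complex.I)) by ring,
    key1]

lemma sphY22 (u : V3) (hu : u 0^2 + u 1^2 + u 2^2 = 1) :
    sphY 2 2 u = (3:ℂ) * (Real.sqrt (5/(96*Real.pi)) : ℂ) *
      ((u 0:ℂ) + (u 1:ℂ)*Complex.I)^2 := by
  unfold sphY
  simp only [show (((2:ℕ):ℤ)-2).toNat = 0 by decide, show (((2:ℕ):ℤ)+2).toNat = 4 by decide]
  have hC : (2 * ((2:ℕ):ℝ) + 1) / (4 * Real.pi) *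
      ((Nat.factorial 0 : ℝ) / (Nat.factorial 4 : ℝ)) = 5/(96*Real.pi) := by
    have := Real.pi_ne_zero
    norm_num [Nat.factorial]
    field_simp
    ring
  rw [hC, aL22]
  have he : Complex.I * (((2:ℤ)):ℂ) * (Complex.arg ((u 0:ℂ)+(u 1:ℂ)*Complex.I) : ℂ)
      = ((2:ℕ):ℂ) * ((Complex.arg ((u 0:ℂ)+(u 1:ℂ)*Complex.I):ℂ) * Complex.I) := by
    push_cast; ring
  rw [he, Complex.exp_nat_mul]
  have h12 : (1:ℝ) - (u 2)^2 = u 0^2 + u 1^2 := by linarith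
  have hnn : (0:ℝ) ≤ u 0^2 + u 1^2 := by positivity
  rw [h12, show (u 0^2 + u 1^2 : ℝ) = Real.sqrt (u 0^2 + u 1^2)^2 from (Real.sq_sqrt hnn).symm]
  push_cast
  rw [show (Real.sqrt (5/(96*Real.pi)) : ℂ) * (3*(Real.sqrt (u 0^2+u 1^2):ℂ)^2) *
      Complex.exp ((Complex.arg ((u 0:ℂ)+(u 1:ℂ)*Complex.I):ℂ) * Complex.I)^2
      = (3:ℂ) * (Real.sqrt (5/(96*Real.pi)) : ℂ) *
        ((Real.sqrt (u 0^2+u 1^2):ℂ) *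
        Complex.exp ((Complex.arg ((u 0:ℂ)+(u 1:ℂ)*Complex.I):ℂ) * Complex.I))^2 by ring,
    key1]
lemma pi32 : Real.pi ^ ((3:ℝ)/2) = Real.pi * Real.sqrt Real.pi := by
  rw [show (3:ℝ)/2 = 1 + 1/2 by norm_num, Real.rpow_add Real.pi_pos, Real.rpow_one,
    ← Real.sqrt_eq_rpow]

lemma enorm3_zero {v : V3} (h : enorm3 v = 0) : v 0 = 0 ∧ v 1 = 0 ∧ v 2 = 0 := by
  have h1 := Real.sqrt_eq_zero'.mp h
  have h0 : v 0^2 = 0 := by nlinarith [sq_nonneg (v 0), sq_nonneg (v 1), sq_nonneg (v 2)]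
  have hb : v 1^2 = 0 := by nlinarith [sq_nonneg (v 0), sq_nonneg (v 1), sq_nonneg (v 2)]
  have hc : v 2^2 = 0 := by nlinarith [sq_nonneg (v 0), sq_nonneg (v 1), sq_nonneg (v 2)]
  exact ⟨pow_eq_zero_iff two_ne_zero |>.mp h0, pow_eq_zero_iff two_ne_zero |>.mp hb,
    pow_eq_zero_iff two_ne_zero |>.mp hc⟩

lemma hR3 (v : V3) : enorm3 v ^ 2 = v 0^2 + v 1^2 + v 2^2 :=
  Real.sq_sqrt (by positivity)

lemma nrm_unit {v : V3} (hr : enorm3 v ≠ 0) :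
    (nrm v 0)^2 + (nrm v 1)^2 + (nrm v 2)^2 = 1 := by
  simp only [nrm, Pi.smul_apply, smul_eq_mul]
  have h2 := hR3 v
  field_simp
  linarith

lemma nrm_app (v : V3) (i : Fin 3) : nrm v i = (enorm3 v)⁻¹ * v i := rfl

lemma b111 (v : V3) : burnett 1 1 1 v =
    -(((Real.sqrt 5)⁻¹ * ((5 - (v 0^2+v 1^2+v 2^2))/2) : ℝ) : ℂ) *
      ((v 0:ℂ) + (v 1:ℂ) * Complex.I) := by
  unfold burnett
  have hc1 : (2:ℝ) ^ (1 - ((1:ℕ):ℤ)) * Real.pi ^ ((3:ℝ)/2) * ((Nat.factorial 1 : ℕ):ℝ) /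
      Real.Gamma (((1:ℕ):ℝ) + ((1:ℕ):ℝ) + 3/2) = 8/15 * Real.pi := by
    rw [show (1 - ((1:ℕ):ℤ)) = 0 by decide, show (((1:ℕ):ℝ) + ((1:ℕ):ℝ) + 3/2) = 7/2 by
      push_cast; ring, G72, pi32]
    have h := Real.sqrt_pos.mpr Real.pi_pos
    norm_num [Nat.factorial]
    field_simp
  rw [hc1, show (((1:ℕ):ℝ) + 1/2) = 3/2 by push_cast; ring, lag1]
  by_cases hr : enorm3 v = 0
  · obtain ⟨h0,h1,h2⟩ := enorm3_zero hr
    rw [hr]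
    norm_num [h0, h1]
  · rw [sphY11 (nrm v) (nrm_unit hr), nrm_app, nrm_app]
    have hcc : Real.sqrt (8/15*Real.pi) * Real.sqrt (3/(8*Real.pi)) = (Real.sqrt 5)⁻¹ := by
      rw [← Real.sqrt_mul (by positivity), show (8/15*Real.pi) * (3/(8*Real.pi)) = 5⁻¹ by
        field_simp; ring, Real.sqrt_inv]
    have step : (Real.sqrt (8/15*Real.pi) : ℂ) * ((5/2 - enorm3 v^2/2 : ℝ) : ℂ) *
        ((enorm3 v ^ 1 : ℝ) : ℂ) * (-(Real.sqrt (3/(8*Real.pi)) : ℂ) *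
          (((enorm3 v)⁻¹ * v 0 : ℝ) + ((enorm3 v)⁻¹ * v 1 : ℝ) * Complex.I))
        = (( -(Real.sqrt (8/15*Real.pi) * (5/2 - enorm3 v^2/2) * enorm3 v ^ 1 *
            Real.sqrt (3/(8*Real.pi)) * (enorm3 v)⁻¹) : ℝ) : ℂ) *
          ((v 0:ℂ) + (v 1:ℂ) * Complex.I) := by
      push_cast
      ring
    rw [step]
    congr 1
    rw [← Complex.ofReal_neg]
    congr 1
    rw [hR3 v, pow_one]
    rw [← hcc]
    field_simp
lemma b101 (v : V3) : burnett 1 0 1 v =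
    ((Real.sqrt (2/5) * ((5 - (v 0^2+v 1^2+v 2^2))/2) * v 2 : ℝ) : ℂ) := by
  unfold burnett
  have hc1 : (2:ℝ) ^ (1 - ((1:ℕ):ℤ)) * Real.pi ^ ((3:ℝ)/2) * ((Nat.factorial 1 : ℕ):ℝ) /
      Real.Gamma (((1:ℕ):ℝ) + ((1:ℕ):ℝ) + 3/2) = 8/15 * Real.pi := by
    rw [show (1 - ((1:ℕ):ℤ)) = 0 by decide, show (((1:ℕ):ℝ) + ((1:ℕ):ℝ) + 3/2) = 7/2 by
      push_cast; ring, G72, pi32]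
    have h := Real.sqrt_pos.mpr Real.pi_pos
    norm_num [Nat.factorial]
    field_simp
  rw [hc1, show (((1:ℕ):ℝ) + 1/2) = 3/2 by push_cast; ring, lag1]
  by_cases hr : enorm3 v = 0
  · obtain ⟨h0,h1,h2⟩ := enorm3_zero hr
    rw [hr]
    norm_num [h2]
  · rw [sphY10 (nrm v), nrm_app]
    have hcc : Real.sqrt (8/15*Real.pi) * Real.sqrt (3/(4*Real.pi)) = Real.sqrt (2/5) := by
      rw [← Real.sqrt_mul (by positivity)]
      congr 1
      field_simp
      ring
    have step : (Real.sqrt (8/15*Real.pi) : ℂ) * ((5/2 - enorm3 v^2/2 : ℝ) : ℂ) *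
        ((enorm3 v ^ 1 : ℝ) : ℂ) * ((Real.sqrt (3/(4*Real.pi)) : ℂ) *
          (((enorm3 v)⁻¹ * v 2 : ℝ) : ℂ))
        = ((Real.sqrt (8/15*Real.pi) * (5/2 - enorm3 v^2/2) * enorm3 v ^ 1 *
            (Real.sqrt (3/(4*Real.pi)) * ((enorm3 v)⁻¹ * v 2)) : ℝ) : ℂ) := by
      push_cast
      ring
    rw [step]
    congr 1
    rw [hR3 v, pow_one, ← hcc]
    field_simp

lemma b200 (v : V3) : burnett 2 0 0 v =
    (((3*(v 2)^2 - (v 0^2+v 1^2+v 2^2)) / (2*Real.sqrt 3) : ℝ) : ℂ) := by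
  unfold burnett
  have hc1 : (2:ℝ) ^ (1 - ((2:ℕ):ℤ)) * Real.pi ^ ((3:ℝ)/2) * ((Nat.factorial 0 : ℕ):ℝ) /
      Real.Gamma (((0:ℕ):ℝ) + ((2:ℕ):ℝ) + 3/2) = 4/15 * Real.pi := by
    rw [show (1 - ((2:ℕ):ℤ)) = -1 by decide, show (((0:ℕ):ℝ) + ((2:ℕ):ℝ) + 3/2) = 7/2 by
      push_cast; ring, G72, pi32]
    have h := Real.sqrt_pos.mpr Real.pi_pos
    norm_num [Nat.factorial]
    field_simp
    ring
  rw [hc1, show (((2:ℕ):ℝ) + 1/2) = 5/2 by push_cast; ring, lag0]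
  by_cases hr : enorm3 v = 0
  · obtain ⟨h0,h1,h2⟩ := enorm3_zero hr
    rw [hr]
    norm_num [h0, h1, h2]
  · rw [sphY20 (nrm v), nrm_app]
    have hcc : Real.sqrt (4/15*Real.pi) * Real.sqrt (5/(4*Real.pi)) = (Real.sqrt 3)⁻¹ := by
      rw [← Real.sqrt_mul (by positivity), show (4/15*Real.pi) * (5/(4*Real.pi)) = 3⁻¹ by
        field_simp; ring, Real.sqrt_inv]
    have step : (Real.sqrt (4/15*Real.pi) : ℂ) * ((1:ℝ) : ℂ) *
        ((enorm3 v ^ 2 : ℝ) : ℂ) * ((Real.sqrt (5/(4*Real.pi)) : ℂ) *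
          (((3*((enorm3 v)⁻¹ * v 2)^2 - 1)/2 : ℝ) : ℂ))
        = ((Real.sqrt (4/15*Real.pi) * 1 * enorm3 v ^ 2 *
            (Real.sqrt (5/(4*Real.pi)) * ((3*((enorm3 v)⁻¹ * v 2)^2 - 1)/2)) : ℝ) : ℂ) := by
      push_cast
      ring
    rw [step]
    congr 1
    have h1 : Real.sqrt (4/15*Real.pi) * 1 * enorm3 v ^ 2 *
        (Real.sqrt (5/(4*Real.pi)) * ((3*((enorm3 v)⁻¹ * v 2)^2 - 1)/2))
        = (Real.sqrt (4/15*Real.pi) * Real.sqrt (5/(4*Real.pi))) *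
          ((3*(v 2)^2 - enorm3 v ^ 2)/2) := by
      field_simp
    rw [h1, hcc, hR3 v, inv_mul_eq_div, div_div]

lemma sqrt18 : Real.sqrt 18 = 3 * Real.sqrt 2 := by
  rw [show (18:ℝ) = 9*2 by norm_num, Real.sqrt_mul (by norm_num),
    show (9:ℝ) = 3^2 by norm_num, Real.sqrt_sq (by norm_num)]

lemma sqrt72 : Real.sqrt 72 = 6 * Real.sqrt 2 := by
  rw [show (72:ℝ) = 36*2 by norm_num, Real.sqrt_mul (by norm_num),
    show (36:ℝ) = 6^2 by norm_num, Real.sqrt_sq (by norm_num)]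

lemma b210 (v : V3) : burnett 2 1 0 v =
    -(((Real.sqrt 2)⁻¹ * v 2 : ℝ) : ℂ) * ((v 0:ℂ) + (v 1:ℂ) * Complex.I) := by
  unfold burnett
  have hc1 : (2:ℝ) ^ (1 - ((2:ℕ):ℤ)) * Real.pi ^ ((3:ℝ)/2) * ((Nat.factorial 0 : ℕ):ℝ) /
      Real.Gamma (((0:ℕ):ℝ) + ((2:ℕ):ℝ) + 3/2) = 4/15 * Real.pi := by
    rw [show (1 - ((2:ℕ):ℤ)) = -1 by decide, show (((0:ℕ):ℝ) + ((2:ℕ):ℝ) + 3/2) = 7/2 by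
      push_cast; ring, G72, pi32]
    have h := Real.sqrt_pos.mpr Real.pi_pos
    norm_num [Nat.factorial]
    field_simp
    ring
  rw [hc1, show (((2:ℕ):ℝ) + 1/2) = 5/2 by push_cast; ring, lag0]
  by_cases hr : enorm3 v = 0
  · obtain ⟨h0,h1,h2⟩ := enorm3_zero hr
    rw [hr]
    norm_num [h0, h1, h2]
  · rw [sphY21 (nrm v) (nrm_unit hr), nrm_app, nrm_app, nrm_app]
    have hcc : 3 * (Real.sqrt (4/15*Real.pi) * Real.sqrt (5/(24*Real.pi)))
        = (Real.sqrt 2)⁻¹ := by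
      rw [← Real.sqrt_mul (by positivity), show (4/15*Real.pi) * (5/(24*Real.pi)) = 18⁻¹ by
        field_simp; ring, Real.sqrt_inv, sqrt18]
      have h2 : Real.sqrt 2 ≠ 0 := by positivity
      field_simp
    have step : (Real.sqrt (4/15*Real.pi) : ℂ) * ((1:ℝ) : ℂ) *
        ((enorm3 v ^ 2 : ℝ) : ℂ) * (-(3:ℂ) * (Real.sqrt (5/(24*Real.pi)) : ℂ) *
          (((enorm3 v)⁻¹ * v 2 : ℝ) : ℂ) *
          ((((enorm3 v)⁻¹ * v 0 : ℝ) : ℂ) + (((enorm3 v)⁻¹ * v 1 : ℝ) : ℂ) * Complex.I))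
        = -(((3 * (Real.sqrt (4/15*Real.pi) * Real.sqrt (5/(24*Real.pi)))) * enorm3 v ^ 2 *
            ((enorm3 v)⁻¹ * v 2) * (enorm3 v)⁻¹ : ℝ) : ℂ) *
          ((v 0:ℂ) + (v 1:ℂ) * Complex.I) := by
      push_cast
      ring
    have hS : 3 * (Real.sqrt (4/15*Real.pi) * Real.sqrt (5/(24*Real.pi))) * enorm3 v ^ 2 *
        ((enorm3 v)⁻¹ * v 2) * (enorm3 v)⁻¹ = (Real.sqrt 2)⁻¹ * v 2 := by
      rw [hcc]
      field_simp
    rw [step, hS]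

lemma b220 (v : V3) : burnett 2 2 0 v =
    (((2 * Real.sqrt 2)⁻¹ : ℝ) : ℂ) * ((v 0:ℂ) + (v 1:ℂ) * Complex.I)^2 := by
  unfold burnett
  have hc1 : (2:ℝ) ^ (1 - ((2:ℕ):ℤ)) * Real.pi ^ ((3:ℝ)/2) * ((Nat.factorial 0 : ℕ):ℝ) /
      Real.Gamma (((0:ℕ):ℝ) + ((2:ℕ):ℝ) + 3/2) = 4/15 * Real.pi := by
    rw [show (1 - ((2:ℕ):ℤ)) = -1 by decide, show (((0:ℕ):ℝ) + ((2:ℕ):ℝ) + 3/2) = 7/2 by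
      push_cast; ring, G72, pi32]
    have h := Real.sqrt_pos.mpr Real.pi_pos
    norm_num [Nat.factorial]
    field_simp
    ring
  rw [hc1, show (((2:ℕ):ℝ) + 1/2) = 5/2 by push_cast; ring, lag0]
  by_cases hr : enorm3 v = 0
  · obtain ⟨h0,h1,h2⟩ := enorm3_zero hr
    rw [hr]
    norm_num [h0, h1, h2]
  · rw [sphY22 (nrm v) (nrm_unit hr), nrm_app, nrm_app]
    have hcc : 3 * (Real.sqrt (4/15*Real.pi) * Real.sqrt (5/(96*Real.pi)))
        = (2 * Real.sqrt 2)⁻¹ := by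
      rw [← Real.sqrt_mul (by positivity), show (4/15*Real.pi) * (5/(96*Real.pi)) = 72⁻¹ by
        field_simp; ring, Real.sqrt_inv, sqrt72]
      have h2 : Real.sqrt 2 ≠ 0 := by positivity
      field_simp
      ring
    have step : (Real.sqrt (4/15*Real.pi) : ℂ) * ((1:ℝ) : ℂ) *
        ((enorm3 v ^ 2 : ℝ) : ℂ) * ((3:ℂ) * (Real.sqrt (5/(96*Real.pi)) : ℂ) *
          ((((enorm3 v)⁻¹ * v 0 : ℝ) : ℂ) + (((enorm3 v)⁻¹ * v 1 : ℝ) : ℂ) * Complex.I)^2)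
        = (((3 * (Real.sqrt (4/15*Real.pi) * Real.sqrt (5/(96*Real.pi)))) * enorm3 v ^ 2 *
            (enorm3 v)⁻¹ * (enorm3 v)⁻¹ : ℝ) : ℂ) *
          ((v 0:ℂ) + (v 1:ℂ) * Complex.I)^2 := by
      push_cast
      ring
    have hS : 3 * (Real.sqrt (4/15*Real.pi) * Real.sqrt (5/(96*Real.pi))) * enorm3 v ^ 2 *
        (enorm3 v)⁻¹ * (enorm3 v)⁻¹ = (2 * Real.sqrt 2)⁻¹ := by
      rw [hcc]
      field_simp
    rw [step, hS]
lemma int_ofReal (g : V3 → ℝ) : ∫ v : V3, ((g v : ℝ):ℂ) = ((∫ v : V3, g v : ℝ):ℂ) :=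
  integral_ofReal

lemma fCoef_split (f : V3 → ℝ) (l : ℕ) (m : ℤ) (n : ℕ) (g1 g2 : V3 → ℝ)
    (h1 : Integrable g1) (h2 : Integrable g2)
    (hpt : ∀ v, (starRingEnd ℂ) (burnett l m n v) * (f v : ℂ)
      = ((g1 v : ℝ):ℂ) + ((g2 v : ℝ):ℂ) * Complex.I) :
    fCoef f l m n = ((∫ v, g1 v : ℝ):ℂ) + ((∫ v, g2 v : ℝ):ℂ) * Complex.I := by
  unfold fCoef
  rw [integral_congr_ae (Filter.Eventually.of_forall hpt)]
  have e1 : ∫ (a : V3), (((g1 a : ℝ):ℂ) + ((g2 a : ℝ):ℂ) * Complex.I)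
      = (∫ (a : V3), ((g1 a : ℝ):ℂ)) + ∫ (a : V3), ((g2 a : ℝ):ℂ) * Complex.I :=
    integral_add h1.ofReal (h2.ofReal.mul_const Complex.I)
  rw [e1, integral_mul_const, int_ofReal, int_ofReal]

lemma int_comb2 (g1 g2 : V3 → ℝ) (a b : ℝ) (h1 : Integrable g1) (h2 : Integrable g2) :
    ∫ v : V3, (a * g1 v + b * g2 v) = a * (∫ v, g1 v) + b * ∫ v, g2 v := by
  have e1 : ∫ v : V3, (a * g1 v + b * g2 v)
      = (∫ v : V3, a * g1 v) + ∫ v : V3, b * g2 v :=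
    integral_add (h1.const_mul a) (h2.const_mul b)
  rw [e1, integral_const_mul, integral_const_mul]

lemma int_comb3 (g1 g2 g3 : V3 → ℝ) (a b c : ℝ) (h1 : Integrable g1) (h2 : Integrable g2)
    (h3 : Integrable g3) :
    ∫ v : V3, (a * g1 v + b * g2 v + c * g3 v)
      = a * (∫ v, g1 v) + b * (∫ v, g2 v) + c * ∫ v, g3 v := by
  have e1 : ∫ v : V3, (a * g1 v + b * g2 v + c * g3 v)
      = (∫ v : V3, (a * g1 v + b * g2 v)) + ∫ v : V3, c * g3 v :=
    integral_add ((h1.const_mul a).add (h2.const_mul b)) (h3.const_mul c)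
  rw [e1, int_comb2 g1 g2 a b h1 h2, integral_const_mul]

lemma fCoef_split' (f : V3 → ℝ) (l : ℕ) (m : ℤ) (n : ℕ) (g1 g2 : V3 → ℝ) (A B : ℝ)
    (h1 : Integrable g1) (h2 : Integrable g2)
    (hpt : ∀ v, (starRingEnd ℂ) (burnett l m n v) * (f v : ℂ)
      = ((g1 v : ℝ):ℂ) + ((g2 v : ℝ):ℂ) * Complex.I)
    (hA : ∫ v, g1 v = A) (hB : ∫ v, g2 v = B) :
    fCoef f l m n = (A:ℂ) + (B:ℂ) * Complex.I := by
  rw [fCoef_split f l m n g1 g2 h1 h2 hpt, hA, hB]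


set_option maxHeartbeats 2000000 in
/-- Relations between the heat flux, the stress tensor, and the
Burnett expansion coefficients `f̃_{lmn}` for a normalized distribution function. -/
theorem heatflux_stress_from_coefficients (f : V3 → ℝ)
    (hf : Integrable f)
    (h3 : Integrable (fun v : V3 => enorm3 v ^ 3 * f v))
    (hmass : ∫ v : V3, f v = 1)
    (hmom : ∀ i : Fin 3, ∫ v : V3, v i * f v = 0)
    (hen : ∫ v : V3, enorm3 v ^ 2 * f v = 3) :
    heatFlux f 0 = Real.sqrt 5 * (fCoef f 1 1 1).re ∧
    heatFlux f 1 = -(Real.sqrt 5 * (fCoef f 1 1 1).im) ∧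
    ((heatFlux f 2 : ℝ) : ℂ) = -((Real.sqrt (5 / 2) : ℝ) : ℂ) * fCoef f 1 0 1 ∧
    ((stress f 0 0 : ℝ) : ℂ) =
      ((Real.sqrt 2 * (fCoef f 2 2 0).re : ℝ) : ℂ) -
        fCoef f 2 0 0 / ((Real.sqrt 3 : ℝ) : ℂ) ∧
    stress f 0 1 = -(Real.sqrt 2 * (fCoef f 2 2 0).im) ∧
    stress f 0 2 = -(Real.sqrt 2 * (fCoef f 2 1 0).re) ∧
    ((stress f 1 1 : ℝ) : ℂ) =
      -((Real.sqrt 2 * (fCoef f 2 2 0).re : ℝ) : ℂ) -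
        fCoef f 2 0 0 / ((Real.sqrt 3 : ℝ) : ℂ) ∧
    stress f 1 2 = Real.sqrt 2 * (fCoef f 2 1 0).im ∧
    ((stress f 2 2 : ℝ) : ℂ) = 2 * fCoef f 2 0 0 / ((Real.sqrt 3 : ℝ) : ℂ) := by
  -- basic facts
  have h2ne : Real.sqrt 2 ≠ 0 := by positivity
  have h3ne : Real.sqrt 3 ≠ 0 := by positivity
  have h5ne : Real.sqrt 5 ≠ 0 := by positivity
  have h22 : Real.sqrt 2 * Real.sqrt 2 = 2 := Real.mul_self_sqrt (by norm_num)
  have h33 : Real.sqrt 3 * Real.sqrt 3 = 3 := Real.mul_self_sqrt (by norm_num)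
  have k2 : Real.sqrt 2 * (2*Real.sqrt 2)⁻¹ = 1/2 := by
    field_simp
  have k2' : Real.sqrt 2 * (Real.sqrt 2)⁻¹ = 1 := mul_inv_cancel₀ h2ne
  have k3 : (2*Real.sqrt 3)⁻¹ * (Real.sqrt 3)⁻¹ = 1/6 := by
    field_simp
    nlinarith [h33]
  have k5 : Real.sqrt 5 * (Real.sqrt 5)⁻¹ = 1 := mul_inv_cancel₀ h5ne
  have k52 : Real.sqrt (5/2) * Real.sqrt (2/5) = 1 := by
    rw [← Real.sqrt_mul (by norm_num)]
    norm_num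
  -- integrability
  have hnn : ∀ v : V3, 0 ≤ enorm3 v := fun v => Real.sqrt_nonneg _
  have habs0 : ∀ (v : V3) (i : Fin 3), v i ^ 2 ≤ v 0^2 + v 1^2 + v 2^2 → |v i| ≤ enorm3 v := by
    intro v i h
    rw [← Real.sqrt_sq_eq_abs]
    exact Real.sqrt_le_sqrt h
  have habs : ∀ (v : V3) (i : Fin 3), |v i| ≤ enorm3 v := by
    intro v i
    fin_cases i
    · exact habs0 v 0 (by nlinarith [sq_nonneg (v 1), sq_nonneg (v 2)])
    · exact habs0 v 1 (by nlinarith [sq_nonneg (v 0), sq_nonneg (v 2)])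
    · exact habs0 v 2 (by nlinarith [sq_nonneg (v 0), sq_nonneg (v 1)])
  have hb1 : ∀ v : V3, enorm3 v ≤ 1 + enorm3 v ^ 3 := by
    intro v
    have h0 := hnn v
    nlinarith [mul_nonneg h0 (sq_nonneg (enorm3 v - 1)), sq_nonneg (enorm3 v - 1),
      sq_nonneg (enorm3 v)]
  have hb2 : ∀ v : V3, enorm3 v ^ 2 ≤ 1 + enorm3 v ^ 3 := by
    intro v
    have h0 := hnn v
    nlinarith [mul_nonneg h0 (sq_nonneg (enorm3 v - 1)), sq_nonneg (2*enorm3 v - 1)]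
  have hmaster : Integrable (fun v : V3 => |f v| + enorm3 v ^ 3 * |f v|) := by
    have h3' : Integrable (fun v : V3 => enorm3 v ^ 3 * |f v|) := by
      have he : (fun v : V3 => enorm3 v ^ 3 * |f v|) = fun v => |enorm3 v ^ 3 * f v| := by
        funext v
        rw [abs_mul, abs_of_nonneg (pow_nonneg (hnn v) 3)]
      rw [he]
      exact h3.abs
    exact hf.abs.add h3'
  have hcontE : Continuous enorm3 := by
    have : Continuous fun v : V3 => v 0 ^2 + v 1^2 + v 2^2 := by
      refine (((continuous_apply (0:Fin 3)).pow 2).add ((continuous_apply (1:Fin 3)).pow 2)).add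
        ((continuous_apply (2:Fin 3)).pow 2)
    exact Real.continuous_sqrt.comp this
  have key : ∀ g : V3 → ℝ, Continuous g → (∀ v, |g v| ≤ 1 + enorm3 v ^ 3) →
      Integrable (fun v : V3 => g v * f v) := by
    intro g hg hb
    refine hmaster.mono' (hg.aestronglyMeasurable.mul hf.1) ?_
    filter_upwards with v
    rw [Real.norm_eq_abs, abs_mul]
    calc |g v| * |f v| ≤ (1 + enorm3 v^3) * |f v| :=
          mul_le_mul_of_nonneg_right (hb v) (abs_nonneg _)
      _ = |f v| + enorm3 v^3 * |f v| := by ring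
  have J1 : ∀ i : Fin 3, Integrable (fun v : V3 => v i * f v) := by
    intro i
    apply key _ (continuous_apply i)
    intro v
    exact (habs v i).trans (hb1 v)
  have J2 : ∀ i j : Fin 3, Integrable (fun v : V3 => v i * v j * f v) := by
    intro i j
    apply key _ ((continuous_apply i).mul (continuous_apply j))
    intro v
    rw [Pi.mul_apply, abs_mul]
    calc |v i| * |v j| ≤ enorm3 v * enorm3 v :=
          mul_le_mul (habs v i) (habs v j) (abs_nonneg _) (hnn v)
      _ = enorm3 v ^ 2 := by ring
      _ ≤ 1 + enorm3 v ^ 3 := hb2 v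
  have J3 : ∀ i : Fin 3, Integrable (fun v : V3 => (v 0^2+v 1^2+v 2^2) * v i * f v) := by
    intro i
    have hc : Continuous fun v : V3 => (v 0^2+v 1^2+v 2^2) * v i :=
      ((((continuous_apply (0:Fin 3)).pow 2).add ((continuous_apply (1:Fin 3)).pow 2)).add
        ((continuous_apply (2:Fin 3)).pow 2)).mul (continuous_apply i)
    apply key _ hc
    intro v
    rw [abs_mul, abs_of_nonneg (by positivity : (0:ℝ) ≤ v 0^2+v 1^2+v 2^2), ← hR3 v]
    calc enorm3 v ^ 2 * |v i| ≤ enorm3 v ^ 2 * enorm3 v :=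
          mul_le_mul_of_nonneg_left (habs v i) (by positivity)
      _ = enorm3 v ^ 3 := by ring
      _ ≤ 1 + enorm3 v ^ 3 := by linarith [sq_nonneg (1:ℝ)]
  -- heat flux integrand rewriting
  have hint : ∀ i : Fin 3, (∫ v : V3, enorm3 v ^ 2 * v i * f v)
      = ∫ v : V3, (v 0^2+v 1^2+v 2^2) * v i * f v :=
    fun i => integral_congr_ae (Filter.Eventually.of_forall fun v => by
      show enorm3 v ^ 2 * v i * f v = (v 0^2+v 1^2+v 2^2) * v i * f v
      rw [hR3 v])
  -- fCoef 1 1 1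
  have h111 : fCoef f 1 1 1 =
      (((Real.sqrt 5)⁻¹ * (1/2) * (∫ v : V3, (v 0^2+v 1^2+v 2^2) * v 0 * f v) : ℝ) : ℂ) +
      ((-((Real.sqrt 5)⁻¹ * (1/2)) * (∫ v : V3, (v 0^2+v 1^2+v 2^2) * v 1 * f v) : ℝ) : ℂ)
        * Complex.I := by
    refine fCoef_split' f 1 1 1
      (fun v => (-((Real.sqrt 5)⁻¹ * (5/2))) * (v 0 * f v) +
        ((Real.sqrt 5)⁻¹ * (1/2)) * ((v 0^2+v 1^2+v 2^2) * v 0 * f v))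
      (fun v => ((Real.sqrt 5)⁻¹ * (5/2)) * (v 1 * f v) +
        (-((Real.sqrt 5)⁻¹ * (1/2))) * ((v 0^2+v 1^2+v 2^2) * v 1 * f v))
      _ _ (((J1 0).const_mul _).add ((J3 0).const_mul _))
      (((J1 1).const_mul _).add ((J3 1).const_mul _)) ?_ ?_ ?_
    · intro v
      rw [b111 v]
      simp only [map_mul, map_neg, map_add, Complex.conj_ofReal, Complex.conj_I]
      push_cast
      ring
    · exact (int_comb2 _ _ _ _ (J1 0) (J3 0)).trans (by rw [hmom 0]; ring)
    · exact (int_comb2 _ _ _ _ (J1 1) (J3 1)).trans (by rw [hmom 1]; ring)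
  -- fCoef 1 0 1
  have h101 : fCoef f 1 0 1 =
      ((-(Real.sqrt (2/5) * (1/2)) * (∫ v : V3, (v 0^2+v 1^2+v 2^2) * v 2 * f v) : ℝ) : ℂ) +
      ((0 : ℝ) : ℂ) * Complex.I := by
    refine fCoef_split' f 1 0 1
      (fun v => (Real.sqrt (2/5) * (5/2)) * (v 2 * f v) +
        (-(Real.sqrt (2/5) * (1/2))) * ((v 0^2+v 1^2+v 2^2) * v 2 * f v))
      (fun v => (0:ℝ) * (v 2 * f v))
      _ _ (((J1 2).const_mul _).add ((J3 2).const_mul _)) ((J1 2).const_mul _) ?_ ?_ ?_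
    · intro v
      rw [b101 v]
      simp only [Complex.conj_ofReal]
      push_cast
      ring
    · exact (int_comb2 _ _ _ _ (J1 2) (J3 2)).trans (by rw [hmom 2]; ring)
    · simp
  -- fCoef 2 0 0
  have h200 : fCoef f 2 0 0 =
      (((-(2*Real.sqrt 3)⁻¹) * (∫ v : V3, v 0*v 0*f v) + (-(2*Real.sqrt 3)⁻¹) *
        (∫ v : V3, v 1*v 1*f v) + (2*(2*Real.sqrt 3)⁻¹) * (∫ v : V3, v 2*v 2*f v) : ℝ) : ℂ) +
      ((0 : ℝ) : ℂ) * Complex.I := by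
    refine fCoef_split' f 2 0 0
      (fun v => (-(2*Real.sqrt 3)⁻¹) * (v 0*v 0*f v) + (-(2*Real.sqrt 3)⁻¹) * (v 1*v 1*f v) +
        (2*(2*Real.sqrt 3)⁻¹) * (v 2*v 2*f v))
      (fun v => (0:ℝ) * (v 0 * f v))
      _ _ ((((J2 0 0).const_mul _).add ((J2 1 1).const_mul _)).add ((J2 2 2).const_mul _))
      ((J1 0).const_mul _) ?_ ?_ ?_
    · intro v
      rw [b200 v]
      simp only [Complex.conj_ofReal]
      push_cast
      have h3c : ((Real.sqrt 3 : ℝ) : ℂ) ≠ 0 := by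
        exact_mod_cast Complex.ofReal_ne_zero.mpr h3ne
      field_simp
      ring
    · exact int_comb3 _ _ _ _ _ _ (J2 0 0) (J2 1 1) (J2 2 2)
    · simp
  -- fCoef 2 2 0
  have h220 : fCoef f 2 2 0 =
      (((2*Real.sqrt 2)⁻¹ * (∫ v : V3, v 0*v 0*f v) + (-(2*Real.sqrt 2)⁻¹) *
        (∫ v : V3, v 1*v 1*f v) : ℝ) : ℂ) +
      (((-(2*Real.sqrt 2)⁻¹) * (∫ v : V3, v 0*v 1*f v) + (-(2*Real.sqrt 2)⁻¹) *
        (∫ v : V3, v 0*v 1*f v) : ℝ) : ℂ) * Complex.I := by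
    refine fCoef_split' f 2 2 0
      (fun v => (2*Real.sqrt 2)⁻¹ * (v 0*v 0*f v) + (-(2*Real.sqrt 2)⁻¹) * (v 1*v 1*f v))
      (fun v => (-(2*Real.sqrt 2)⁻¹) * (v 0*v 1*f v) + (-(2*Real.sqrt 2)⁻¹) * (v 0*v 1*f v))
      _ _ (((J2 0 0).const_mul _).add ((J2 1 1).const_mul _))
      (((J2 0 1).const_mul _).add ((J2 0 1).const_mul _)) ?_ ?_ ?_
    · intro v
      rw [b220 v]
      simp only [map_mul, map_pow, map_add, Complex.conj_ofReal, Complex.conj_I]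
      push_cast
      linear_combination ((2*(Real.sqrt 2:ℂ))⁻¹ * (f v:ℂ) * (v 1:ℂ)^2) * Complex.I_sq
    · exact int_comb2 _ _ _ _ (J2 0 0) (J2 1 1)
    · exact int_comb2 _ _ _ _ (J2 0 1) (J2 0 1)
  -- fCoef 2 1 0
  have h210 : fCoef f 2 1 0 =
      (((-(Real.sqrt 2)⁻¹) * (∫ v : V3, v 0*v 2*f v) : ℝ) : ℂ) +
      (((Real.sqrt 2)⁻¹ * (∫ v : V3, v 1*v 2*f v) : ℝ) : ℂ) * Complex.I := by
    refine fCoef_split' f 2 1 0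
      (fun v => (-(Real.sqrt 2)⁻¹) * (v 0*v 2*f v))
      (fun v => (Real.sqrt 2)⁻¹ * (v 1*v 2*f v))
      _ _ ((J2 0 2).const_mul _) ((J2 1 2).const_mul _) ?_ ?_ ?_
    · intro v
      rw [b210 v]
      simp only [map_mul, map_neg, map_add, Complex.conj_ofReal, Complex.conj_I]
      push_cast
      ring
    · exact integral_const_mul _ _
    · exact integral_const_mul _ _
  -- stress evaluations
  have hs00 : stress f 0 0 = (2/3)*(∫ v : V3, v 0*v 0*f v) + (-1/3)*(∫ v : V3, v 1*v 1*f v)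
      + (-1/3)*(∫ v : V3, v 2*v 2*f v) := by
    unfold stress
    exact (integral_congr_ae (Filter.Eventually.of_forall fun v => by
      show (v 0 * v 0 - (if (0:Fin 3) = 0 then (1:ℝ) else 0) * enorm3 v ^ 2 / 3) * f v = _
      rw [hR3 v, if_pos rfl]
      ring)).trans (int_comb3 _ _ _ _ _ _ (J2 0 0) (J2 1 1) (J2 2 2))
  have hs11 : stress f 1 1 = (-1/3)*(∫ v : V3, v 0*v 0*f v) + (2/3)*(∫ v : V3, v 1*v 1*f v)
      + (-1/3)*(∫ v : V3, v 2*v 2*f v) := by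
    unfold stress
    exact (integral_congr_ae (Filter.Eventually.of_forall fun v => by
      show (v 1 * v 1 - (if (1:Fin 3) = 1 then (1:ℝ) else 0) * enorm3 v ^ 2 / 3) * f v = _
      rw [hR3 v, if_pos rfl]
      ring)).trans (int_comb3 _ _ _ _ _ _ (J2 0 0) (J2 1 1) (J2 2 2))
  have hs22 : stress f 2 2 = (-1/3)*(∫ v : V3, v 0*v 0*f v) + (-1/3)*(∫ v : V3, v 1*v 1*f v)
      + (2/3)*(∫ v : V3, v 2*v 2*f v) := by
    unfold stress
    exact (integral_congr_ae (Filter.Eventually.of_forall fun v => by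
      show (v 2 * v 2 - (if (2:Fin 3) = 2 then (1:ℝ) else 0) * enorm3 v ^ 2 / 3) * f v = _
      rw [hR3 v, if_pos rfl]
      ring)).trans (int_comb3 _ _ _ _ _ _ (J2 0 0) (J2 1 1) (J2 2 2))
  have hs01 : stress f 0 1 = ∫ v : V3, v 0*v 1*f v := by
    unfold stress
    exact integral_congr_ae (Filter.Eventually.of_forall fun v => by
      show (v 0 * v 1 - (if (0:Fin 3) = 1 then (1:ℝ) else 0) * enorm3 v ^ 2 / 3) * f v = _
      rw [if_neg (by decide)]
      ring)
  have hs02 : stress f 0 2 = ∫ v : V3, v 0*v 2*f v := by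
    unfold stress
    exact integral_congr_ae (Filter.Eventually.of_forall fun v => by
      show (v 0 * v 2 - (if (0:Fin 3) = 2 then (1:ℝ) else 0) * enorm3 v ^ 2 / 3) * f v = _
      rw [if_neg (by decide)]
      ring)
  have hs12 : stress f 1 2 = ∫ v : V3, v 1*v 2*f v := by
    unfold stress
    exact integral_congr_ae (Filter.Eventually.of_forall fun v => by
      show (v 1 * v 2 - (if (1:Fin 3) = 2 then (1:ℝ) else 0) * enorm3 v ^ 2 / 3) * f v = _
      rw [if_neg (by decide)]
      ring)
  refine ⟨?_, ?_, ?_, ?_, ?_, ?_, ?_, ?_, ?_⟩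
  · -- q1
    rw [h111]
    unfold heatFlux
    rw [hint 0]
    simp only [Complex.add_re, Complex.ofReal_re, Complex.mul_re, Complex.I_re,
      Complex.ofReal_im, Complex.I_im, mul_zero, mul_one, zero_mul, sub_zero, zero_sub,
      add_zero, zero_add, neg_zero, neg_neg]
    field_simp
  · -- q2
    rw [h111]
    unfold heatFlux
    rw [hint 1]
    simp only [Complex.add_im, Complex.ofReal_im, Complex.mul_im, Complex.I_im,
      Complex.ofReal_re, Complex.I_re, mul_zero, mul_one, zero_mul, sub_zero, zero_sub,
      add_zero, zero_add, neg_zero, neg_neg]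
    field_simp
  · -- q3
    rw [h101]
    simp only [Complex.ofReal_zero, zero_mul, add_zero]
    unfold heatFlux
    rw [hint 2]
    norm_cast
    push_cast
    linear_combination (-(1/2) * (∫ v : V3, (v 0^2+v 1^2+v 2^2) * v 2 * f v)) * k52
  · -- sigma 00
    rw [hs00, h220, h200]
    simp only [Complex.add_re, Complex.ofReal_re, Complex.mul_re, Complex.I_re,
      Complex.ofReal_im, Complex.I_im, mul_zero, mul_one, zero_mul, sub_zero, zero_sub,
      add_zero, zero_add, neg_zero, neg_neg, Complex.ofReal_zero]
    norm_cast
    push_cast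
    linear_combination (-((∫ v : V3, v 0*v 0*f v) - (∫ v : V3, v 1*v 1*f v))) * k2 +
      (-(∫ v : V3, v 0*v 0*f v) - (∫ v : V3, v 1*v 1*f v) + 2*(∫ v : V3, v 2*v 2*f v)) * k3
  · -- sigma 01
    rw [hs01, h220]
    simp only [Complex.add_im, Complex.ofReal_im, Complex.mul_im, Complex.I_im,
      Complex.ofReal_re, Complex.I_re, mul_zero, mul_one, zero_mul, sub_zero, zero_sub,
      add_zero, zero_add, neg_zero, neg_neg]
    linear_combination (-(∫ v : V3, v 0*v 1*f v)) * k2'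
  · -- sigma 02
    rw [hs02, h210]
    simp only [Complex.add_re, Complex.ofReal_re, Complex.mul_re, Complex.I_re,
      Complex.ofReal_im, Complex.I_im, mul_zero, mul_one, zero_mul, sub_zero, zero_sub,
      add_zero, zero_add, neg_zero, neg_neg]
    linear_combination (-(∫ v : V3, v 0*v 2*f v)) * k2'
  · -- sigma 11
    rw [hs11, h220, h200]
    simp only [Complex.add_re, Complex.ofReal_re, Complex.mul_re, Complex.I_re,
      Complex.ofReal_im, Complex.I_im, mul_zero, mul_one, zero_mul, sub_zero, zero_sub,
      add_zero, zero_add, neg_zero, neg_neg, Complex.ofReal_zero]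
    norm_cast
    push_cast
    linear_combination ((∫ v : V3, v 0*v 0*f v) - (∫ v : V3, v 1*v 1*f v)) * k2 +
      (-(∫ v : V3, v 0*v 0*f v) - (∫ v : V3, v 1*v 1*f v) + 2*(∫ v : V3, v 2*v 2*f v)) * k3
  · -- sigma 12
    rw [hs12, h210]
    simp only [Complex.add_im, Complex.ofReal_im, Complex.mul_im, Complex.I_im,
      Complex.ofReal_re, Complex.I_re, mul_zero, mul_one, zero_mul, sub_zero, zero_sub,
      add_zero, zero_add, neg_zero, neg_neg]
    linear_combination (-(∫ v : V3, v 1*v 2*f v)) * k2'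
  · -- sigma 22
    rw [hs22, h200]
    simp only [Complex.ofReal_zero, zero_mul, add_zero]
    norm_cast
    push_cast
    linear_combination (2*(∫ v : V3, v 0*v 0*f v) + 2*(∫ v : V3, v 1*v 1*f v) -
      4*(∫ v : V3, v 2*v 2*f v)) * k3

end
end
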